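/- arXiv:math/0407468 — 5 statements merged into one kernel-verified Lean document; each statement's English description precedes it below -/
import Mathlib

section
/- Let T be a Littlewood–Richardson tableau with largest entry ℓ_0, and for 1 ≤ h ≤ ℓ_0 let C_1(h) be the unique cell of T containing h with no other cell containing h northeast of it. Let T' be the filling obtained from T by removing the cells C_1(1), …, C_1(ℓ_0) (keeping all other cells with their entries). Then T' is again a Littlewood–Richardson tableau: its cells form a skew Young diagram, it is semistandard (LR1), and it satisfies condition (LR2). -/
open MvPolynomial Matrix Finset

namespace HTW

/-! ## The polynomial ring `P(M_{n,k+ℓ})` and its matrix-entry variables -/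

/-- Variable index set for the polynomial ring on `n × K` matrices:
a variable for each matrix entry. -/
abbrev Vars (n K : ℕ) := Fin n × Fin K

/-- The polynomial ring `P(M_{n,K})` on complex `n × K` matrices. -/
abbrev PolyRing (n K : ℕ) := MvPolynomial (Vars n K) ℂ

/-- The variable `x_{ab}` (0-based), the `(a,b)` entry of the left `n × k` block `X`
of `Z = [X Y]`; junk value `0` out of range. -/
noncomputable def xvar (n k l : ℕ) (a b : ℕ) : PolyRing n (k + l) :=
  if h : a < n ∧ b < k then X (⟨a, h.1⟩, ⟨b, by omega⟩) else 0

/-- The variable `y_{ac}` (0-based), the `(a,c)` entry of the right `n × ℓ` block `Y`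
of `Z = [X Y]`; junk value `0` out of range. -/
noncomputable def yvar (n k l : ℕ) (a c : ℕ) : PolyRing n (k + l) :=
  if h : a < n ∧ c < l then X (⟨a, h.1⟩, ⟨k + c, by omega⟩) else 0

/-- Extension of a partition given on `Fin r` to all of `ℕ` by zero. -/
def ext {r : ℕ} (d : Fin r → ℕ) : ℕ → ℕ := fun i => if h : i < r then d ⟨i, h⟩ else 0

/-! ## The block determinants `Δ_{(D,E,F),(A,B)}` -/

/-- Row index type for the block matrix `Z̃`: superrows of heights `f 0, …, f (t-1)`. -/
abbrev RowIdx {t : ℕ} (f : Fin t → ℕ) := (j : Fin t) × Fin (f j)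

noncomputable def sigmaFinEquiv {t : ℕ} (f : Fin t → ℕ) :
    ((j : Fin t) × Fin (f j)) ≃ Fin (∑ j, f j) :=
  Fintype.equivFinOfCardEq (by simp)

/-- Identification of the column index set (supercolumns of widths
`d 0, …, d (r-1), e 0, …, e (s-1)`) with the row index set, using `|D| + |E| = |F|`. -/
noncomputable def colEquiv {r s t : ℕ} (d : Fin r → ℕ) (e : Fin s → ℕ) (f : Fin t → ℕ)
    (hsum : (∑ i, d i) + (∑ i, e i) = ∑ j, f j) :
    ((i : Fin r) × Fin (d i)) ⊕ ((i : Fin s) × Fin (e i)) ≃ RowIdx f :=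
  (Equiv.sumCongr (sigmaFinEquiv d) (sigmaFinEquiv e)).trans
    (finSumFinEquiv.trans ((finCongr hsum).trans (sigmaFinEquiv f).symm))

/-- The polynomial `Δ_{(D,E,F),(A,B)}` for complex coefficient matrices `A`, `B`:
the determinant of the `|F| × |F|` block matrix `Z̃` with blocks
`α_{jc}·X_{f_j,d_c}` and `β_{jc}·Y_{f_j,e_c}`. -/
noncomputable def Delta (n k l : ℕ) {r s t : ℕ} (d : Fin r → ℕ) (e : Fin s → ℕ)
    (f : Fin t → ℕ) (hsum : (∑ i, d i) + (∑ i, e i) = ∑ j, f j)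
    (A : Fin t → Fin r → ℂ) (B : Fin t → Fin s → ℂ) : PolyRing n (k + l) :=
  Matrix.det (Matrix.of fun i j : RowIdx f =>
    match (colEquiv d e f hsum).symm j with
    | Sum.inl c => MvPolynomial.C (A i.1 c.1) * xvar n k l i.2 c.2
    | Sum.inr c => MvPolynomial.C (B i.1 c.1) * yvar n k l i.2 c.2)

/-- The ring of polynomials in the indeterminates `β_{ih}` with coefficients in
`P(M_{n,k+ℓ})`. -/
abbrev BRing (n k l t s : ℕ) := MvPolynomial (Fin t × Fin s) (PolyRing n (k + l))

/-- The polynomial `Δ_{(D,E,F),(J,B)}` where `J = J_{t,r}` has ones on the diagonal and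
zeros elsewhere and `B` is a matrix of indeterminates `β_{ih}`; an element of the
polynomial ring in the `β_{ih}` over `P(M_{n,k+ℓ})`. -/
noncomputable def DeltaJB (n k l : ℕ) {r s t : ℕ} (d : Fin r → ℕ) (e : Fin s → ℕ)
    (f : Fin t → ℕ) (hsum : (∑ i, d i) + (∑ i, e i) = ∑ j, f j) : BRing n k l t s :=
  Matrix.det (Matrix.of fun i j : RowIdx f =>
    match (colEquiv d e f hsum).symm j with
    | Sum.inl c => if (i.1 : ℕ) = (c.1 : ℕ)
        then (MvPolynomial.C (xvar n k l i.2 c.2) : BRing n k l t s) else 0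
    | Sum.inr c => (X (i.1, c.1) : BRing n k l t s) * MvPolynomial.C (yvar n k l i.2 c.2))

/-- The coefficient `Δ_{(D,E,F),M}` of the monomial `∏ β_{ih}^{m_{ih}}` in the expansion
of `Δ_{(D,E,F),(J,B)}`; a polynomial in the `x_{ab}` and `y_{ac}`. -/
noncomputable def DeltaCoeff (n k l : ℕ) {r s t : ℕ} (d : Fin r → ℕ) (e : Fin s → ℕ)
    (f : Fin t → ℕ) (hsum : (∑ i, d i) + (∑ i, e i) = ∑ j, f j)
    (M : Fin t × Fin s →₀ ℕ) : PolyRing n (k + l) :=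
  MvPolynomial.coeff M (DeltaJB n k l d e f hsum)

/-! ## The tensor product algebra `TA_{n,k,ℓ}` -/

/-- `u` is upper triangular unipotent. -/
def IsUpperUni {m : ℕ} (u : Matrix (Fin m) (Fin m) ℂ) : Prop :=
  (∀ i, u i i = 1) ∧ ∀ i j : Fin m, j < i → u i j = 0

/-- Substitution on `P(M_{n,K})` corresponding to the action of `g ∈ GL_n` by
`(g·p)(Z) = p(g⁻¹·Z) = p(gᵗZ)`, i.e. `Z_{ab} ↦ ∑_c g_{ca} Z_{cb}`. -/
noncomputable def leftSub (n K : ℕ) (g : Matrix (Fin n) (Fin n) ℂ) :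
    PolyRing n K →ₐ[ℂ] PolyRing n K :=
  aeval fun v : Vars n K => ∑ c : Fin n, MvPolynomial.C (g c v.1) * X (c, v.2)

/-- Substitution on `P(M_{n,K})` corresponding to the action of `h ∈ GL_K` by
`(h·p)(Z) = p(h⁻¹·Z) = p(Z h)`, i.e. `Z_{ab} ↦ ∑_c Z_{ac} h_{cb}`. -/
noncomputable def rightSub (n K : ℕ) (g : Matrix (Fin K) (Fin K) ℂ) :
    PolyRing n K →ₐ[ℂ] PolyRing n K :=
  aeval fun v : Vars n K => ∑ c : Fin K, MvPolynomial.C (g c v.2) * X (v.1, c)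

/-- The block diagonal embedding of `GL_k × GL_ℓ` into `GL_{k+ℓ}`. -/
noncomputable def blockDiag (k l : ℕ) (u1 : Matrix (Fin k) (Fin k) ℂ)
    (u2 : Matrix (Fin l) (Fin l) ℂ) : Matrix (Fin (k + l)) (Fin (k + l)) ℂ :=
  (Matrix.fromBlocks u1 0 0 u2).submatrix finSumFinEquiv.symm finSumFinEquiv.symm

/-- The `GL_n` tensor product algebra
`TA_{n,k,ℓ} = P(M_{n,k+ℓ})^{U_k × U_ℓ × U_n}`, as a subspace of `P(M_{n,k+ℓ})`. -/
noncomputable def TA (n k l : ℕ) : Submodule ℂ (PolyRing n (k + l)) where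
  carrier := {p | ∀ (u3 : Matrix (Fin n) (Fin n) ℂ) (u1 : Matrix (Fin k) (Fin k) ℂ)
    (u2 : Matrix (Fin l) (Fin l) ℂ), IsUpperUni u3 → IsUpperUni u1 → IsUpperUni u2 →
    leftSub n (k + l) u3 p = p ∧ rightSub n (k + l) (blockDiag k l u1 u2) p = p}
  add_mem' := by
    intro a b ha hb u3 u1 u2 h3 h1 h2
    refine ⟨?_, ?_⟩
    · rw [map_add, (ha u3 u1 u2 h3 h1 h2).1, (hb u3 u1 u2 h3 h1 h2).1]
    · rw [map_add, (ha u3 u1 u2 h3 h1 h2).2, (hb u3 u1 u2 h3 h1 h2).2]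
  zero_mem' := by
    intro u3 u1 u2 _ _ _
    exact ⟨map_zero _, map_zero _⟩
  smul_mem' := by
    intro c a ha u3 u1 u2 h3 h1 h2
    refine ⟨?_, ?_⟩
    · rw [_root_.map_smul, (ha u3 u1 u2 h3 h1 h2).1]
    · rw [_root_.map_smul, (ha u3 u1 u2 h3 h1 h2).2]

/-- The `i`-th part (0-based `i`) of the transpose of the partition `f`:
`(F^t)_{i+1} = #{j : f_j ≥ i+1}`. -/
def tpart {m : ℕ} (f : Fin m → ℕ) (i : ℕ) : ℕ :=
  (Finset.univ.filter fun j => i < f j).card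

/-! ## Skew diagrams and Littlewood–Richardson tableaux -/

/-- `c'` lies (strictly) northeast of `c`: weakly higher row, weakly further right
column, and not the same cell.  Cells are `(row, column)`, `0`-based, rows increasing
downwards. -/
def NEcell (c' c : ℕ × ℕ) : Prop := c'.1 ≤ c.1 ∧ c.2 ≤ c'.2 ∧ c' ≠ c

instance (c' c : ℕ × ℕ) : Decidable (NEcell c' c) :=
  inferInstanceAs (Decidable (c'.1 ≤ c.1 ∧ c.2 ≤ c'.2 ∧ c' ≠ c))

/-- A finite set of cells `(row, column)` is a skew Young diagram if its columns are
intervals `[dd i, ff i)` for antitone functions `dd ≤ ff`. -/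
def IsSkewDiagram (S : Finset (ℕ × ℕ)) : Prop :=
  ∃ dd ff : ℕ → ℕ, Antitone dd ∧ Antitone ff ∧ (∀ i, dd i ≤ ff i) ∧
    ∀ c : ℕ × ℕ, c ∈ S ↔ dd c.2 ≤ c.1 ∧ c.1 < ff c.2

/-- A Littlewood–Richardson skew tableau: a filling of a skew Young diagram by positive
integers (constant `0` off the diagram) which is semistandard (LR1) and satisfies the
lattice condition (LR2). -/
structure LRTableau where
  /-- the entry in each cell `(row, column)` (`0` off the diagram) -/
  entry : ℕ × ℕ → ℕ
  /-- the underlying set of cells -/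
  supp : Finset (ℕ × ℕ)
  mem_supp : ∀ c, c ∈ supp ↔ entry c ≠ 0
  skew : IsSkewDiagram supp
  /-- (LR1) rows weakly increase from left to right -/
  row_weak : ∀ a i i', i ≤ i' → (a, i) ∈ supp → (a, i') ∈ supp →
    entry (a, i) ≤ entry (a, i')
  /-- (LR1) columns strictly increase from top to bottom -/
  col_strict : ∀ a a' i, a < a' → (a, i) ∈ supp → (a', i) ∈ supp →
    entry (a, i) < entry (a', i)
  /-- (LR2) for `m ≥ 2`, the number of occurrences of `m` in the first `p` rows is at
  most the number of occurrences of `m - 1` in the first `p - 1` rows -/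
  lattice : ∀ m p, 2 ≤ m →
    (supp.filter fun c => c.1 < p ∧ entry c = m).card ≤
      (supp.filter fun c => c.1 + 1 < p ∧ entry c = m - 1).card

/-- The cells of the skew diagram `F^t - D^t`: the `i`-th column consists of the cells
in rows `d_i, …, f_i - 1` (0-based). -/
def shape {r t : ℕ} (d : Fin r → ℕ) (f : Fin t → ℕ) : Finset (ℕ × ℕ) :=
  (Finset.range (∑ j, f j) ×ˢ Finset.range t).filter
    fun c => ext d c.2 ≤ c.1 ∧ c.1 < ext f c.2

/-- `T` is an LR tableau of shape `F^t - D^t` and content `E^t`: the number of entries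
equal to `v` is `(E^t)_v = #{h : e_h ≥ v}`. -/
def IsLRofShape {r s t : ℕ} (T : LRTableau) (d : Fin r → ℕ) (e : Fin s → ℕ)
    (f : Fin t → ℕ) : Prop :=
  T.supp = shape d f ∧
    ∀ v : ℕ, 1 ≤ v →
      (T.supp.filter fun c => T.entry c = v).card =
        (Finset.univ.filter fun h : Fin s => v ≤ e h).card

/-! ## The standard peeling -/

/-- The cells selected by one peeling step: those cells such that no other cell with the
same entry lies northeast of them.  For an LR tableau these are the cells
`C_1(1), …, C_1(ℓ_0)`. -/
def selected (ent : ℕ × ℕ → ℕ) (S : Finset (ℕ × ℕ)) : Finset (ℕ × ℕ) :=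
  S.filter fun c => ∀ c' ∈ S, ent c' = ent c → ¬ NEcell c' c

/-- One step of the standard peeling: remove the selected cells. -/
def peel (ent : ℕ × ℕ → ℕ) (S : Finset (ℕ × ℕ)) : Finset (ℕ × ℕ) := S \ selected ent S

/-- `m_{ih}(T)` (0-based `i`, `h`): the number of cells removed at the `(h+1)`-st step of
the standard peeling of `T` that lie in the `(i+1)`-st column of `F^t`. -/
def peelCount (T : LRTableau) (i h : ℕ) : ℕ :=
  ((selected T.entry ((peel T.entry)^[h] T.supp)).filter fun c => c.2 = i).card

/-- The exponent matrix `M(T) = (m_{ih}(T))` of the monomial `∏ β_{ih}^{m_{ih}}`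
associated to an LR tableau `T`. -/
noncomputable def MT (T : LRTableau) (t s : ℕ) : Fin t × Fin s →₀ ℕ :=
  Finsupp.equivFunOnFinite.symm fun p => peelCount T p.1 p.2

/-! ## The monomials `e(T)` and `ℰ(T)` -/

/-- The monomial `e(T) = ∏_{b ∈ T} y_{a(b), c(b)}` where `a(b)` is the row of the box
`b` and `c(b)` its entry (passing to 0-based indices). -/
noncomputable def eT (n k l : ℕ) (T : LRTableau) : PolyRing n (k + l) :=
  ∏ c ∈ T.supp, yvar n k l c.1 (T.entry c - 1)

/-- The monomial `ℰ(T) = e(T) · ∏_{c=1}^{r} ∏_{j=1}^{d_c} x_{jj}`. -/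
noncomputable def calE (n k l : ℕ) {r : ℕ} (d : Fin r → ℕ) (T : LRTableau) :
    PolyRing n (k + l) :=
  eT n k l T * ∏ c : Fin r, ∏ j ∈ Finset.range (d c), xvar n k l j j

/-! ## The matrix `Ỹ_o` -/

noncomputable def colEquivY {s t : ℕ} (e : Fin s → ℕ) (g : Fin t → ℕ)
    (hE : (∑ h, e h) = ∑ j, g j) : ((h : Fin s) × Fin (e h)) ≃ RowIdx g :=
  (sigmaFinEquiv e).trans ((finCongr hE).trans (sigmaFinEquiv g).symm)

/-- The matrix `Ỹ_o`, with `(j,h)` block `β_{jh}·Y_{(d_j,f_j],e_h}`. -/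
noncomputable def matYo (n k l : ℕ) {r s t : ℕ} (d : Fin r → ℕ) (e : Fin s → ℕ)
    (f : Fin t → ℕ) (hE : (∑ h, e h) = ∑ j, (f j - ext d j)) :
    Matrix (RowIdx fun j => f j - ext d j) (RowIdx fun j => f j - ext d j)
      (BRing n k l t s) :=
  Matrix.of fun i j =>
    (X (i.1, ((colEquivY e _ hE).symm j).1) : BRing n k l t s) *
      MvPolynomial.C (yvar n k l (ext d i.1 + (i.2 : ℕ))
        (((colEquivY e _ hE).symm j).2 : ℕ))

/-- `det Ỹ_o`, a polynomial in the `β_{ih}` with coefficients in `ℂ[y_{ac}]`. -/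
noncomputable def detYo (n k l : ℕ) {r s t : ℕ} (d : Fin r → ℕ) (e : Fin s → ℕ)
    (f : Fin t → ℕ) (hE : (∑ h, e h) = ∑ j, (f j - ext d j)) : BRing n k l t s :=
  Matrix.det (matYo n k l d e f hE)

/-! ## The monomial order on the `y` variables -/

/-- Priority key of a variable: variables with smaller key are larger in the order
`y_{11} > y_{21} > ⋯ > y_{n1} > y_{12} > ⋯`. -/
def varKey {n K : ℕ} (v : Vars n K) : ℕ := (v.2 : ℕ) * n + (v.1 : ℕ)

/-- Graded lexicographic order on monomials (exponent vectors): first compare total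
degrees, then compare lexicographically, larger variables first. -/
def MonLt {n K : ℕ} (m1 m2 : Vars n K →₀ ℕ) : Prop :=
  (m1.sum fun _ x => x) < (m2.sum fun _ x => x) ∨
    ((m1.sum fun _ x => x) = (m2.sum fun _ x => x) ∧
      ∃ v, m1 v < m2 v ∧ ∀ w, varKey w < varKey v → m1 w = m2 w)


/-! ## Further shared definitions -/

/-- The exponent vector of the single variable `y_{ac}` (0-based); zero out of range. -/
noncomputable def yIdx (n k l : ℕ) (a c : ℕ) : Vars n (k + l) →₀ ℕ :=
  if h : a < n ∧ c < l then Finsupp.single (⟨a, h.1⟩, ⟨k + c, by omega⟩) 1 else 0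

/-- The exponent vector of the monomial `e(T)`. -/
noncomputable def eVec (n k l : ℕ) (T : LRTableau) : Vars n (k + l) →₀ ℕ :=
  ∑ c ∈ T.supp, yIdx n k l c.1 (T.entry c - 1)

/-- `i(h)` (0-based): the largest index `i` such that `m_{ih}(T) > 0`, i.e. the
rightmost column of `F^t` receiving a cell at the `(h+1)`-st peeling step. -/
def iNat (T : LRTableau) (t : ℕ) (h : ℕ) : ℕ :=
  Finset.sup ((Finset.range t).filter fun i => 0 < peelCount T i h) id

/-- The `y`-monomial `m` occurs in `p` (a polynomial in the `β_{ih}` over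
`ℂ[x_{ab}, y_{ac}]`) if it occurs in some `β`-coefficient of `p`. -/
def occursY {n k l t s : ℕ} (p : BRing n k l t s) (m : Vars n (k + l) →₀ ℕ) : Prop :=
  ∃ M : Fin t × Fin s →₀ ℕ, m ∈ (MvPolynomial.coeff M p).support

/-- `m` is the leading `y`-monomial of `p` for the order `MonLt`. -/
def IsLeadY {n k l t s : ℕ} (p : BRing n k l t s) (m : Vars n (k + l) →₀ ℕ) : Prop :=
  occursY p m ∧ ∀ m', occursY p m' → m' = m ∨ MonLt m' m


/-! ### Auxiliary lemmas for the peeling theorem -/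

private lemma prodext {z w : ℕ × ℕ} (h1 : z.1 = w.1) (h2 : z.2 = w.2) : z = w := by
  cases z; cases w; simp_all

/-- In a skew diagram, a rectangle-type interpolation: from a cell in column `i` and a
cell in a weakly further-right column `i'`, all cells of column `i'` in between exist. -/
lemma aux_cell_between {S : Finset (ℕ × ℕ)} (hS : IsSkewDiagram S) {a i a' i' b : ℕ}
    (h1 : (a, i) ∈ S) (h2 : (a', i') ∈ S) (hii : i ≤ i') (hab : a ≤ b) (hb : b ≤ a') :
    (b, i') ∈ S := by
  obtain ⟨dd, ff, hdd, hff, hdf, hmem⟩ := hS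
  have g1 := (hmem (a, i)).mp h1
  have g2 := (hmem (a', i')).mp h2
  exact (hmem (b, i')).mpr ⟨le_trans (hdd hii) (le_trans g1.1 hab), lt_of_le_of_lt hb g2.2⟩

lemma aux_col_chain (T : LRTableau) {b b' j : ℕ} (h : b ≤ b')
    (h1 : (b, j) ∈ T.supp) (h2 : (b', j) ∈ T.supp) :
    T.entry (b, j) + (b' - b) ≤ T.entry (b', j) := by
  revert h2
  induction b', h using Nat.le_induction with
  | base => intro _; omega
  | succ n hn ih =>
    intro h2
    have hmid : (n, j) ∈ T.supp := aux_cell_between T.skew h1 h2 le_rfl hn (Nat.le_succ n)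
    have hlt := T.col_strict n (n + 1) j (Nat.lt_succ_self n) hmid h2
    have := ih hmid
    omega

/-- Horizontal-strip property: equal entries in lower rows sit strictly further left. -/
lemma aux_strip (T : LRTableau) {x y : ℕ × ℕ} (h1 : x ∈ T.supp) (h2 : y ∈ T.supp)
    (he : T.entry x = T.entry y) (hr : x.1 < y.1) : y.2 < x.2 := by
  by_contra hcon
  push_neg at hcon
  have hm : (x.1, y.2) ∈ T.supp :=
    aux_cell_between T.skew (a := x.1) (i := x.2) (by simpa using h1) (by simpa using h2)
      hcon le_rfl hr.le
  have hw := T.row_weak x.1 x.2 y.2 hcon (by simpa using h1) hm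
  have hs := T.col_strict x.1 y.1 y.2 hr hm (by simpa using h2)
  simp only [Prod.mk.eta] at hw hs
  omega

lemma aux_mem_selected (T : LRTableau) {w : ℕ × ℕ} :
    w ∈ selected T.entry T.supp ↔
      w ∈ T.supp ∧ ∀ c' ∈ T.supp, T.entry c' = T.entry w → ¬ NEcell c' w :=
  Finset.mem_filter

/-- For every cell there is a selected cell with the same entry weakly northeast of it. -/
lemma aux_exists_sel (T : LRTableau) {c : ℕ × ℕ} (hc : c ∈ T.supp) :
    ∃ w ∈ selected T.entry T.supp, T.entry w = T.entry c ∧ (w = c ∨ NEcell w c) := by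
  classical
  set F := T.supp.filter (fun x => T.entry x = T.entry c) with hF
  have hcF : c ∈ F := Finset.mem_filter.mpr ⟨hc, rfl⟩
  have hR : (F.image Prod.fst).Nonempty := ⟨c.1, Finset.mem_image_of_mem _ hcF⟩
  set r0 := (F.image Prod.fst).min' hR with hr0
  set F0 := F.filter (fun x => x.1 = r0) with hF0
  have hF0ne : (F0.image Prod.snd).Nonempty := by
    obtain ⟨x, hx, hx1⟩ := Finset.mem_image.mp ((F.image Prod.fst).min'_mem hR)
    exact ⟨x.2, Finset.mem_image_of_mem _ (Finset.mem_filter.mpr ⟨hx, hx1⟩)⟩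
  set j0 := (F0.image Prod.snd).max' hF0ne with hj0
  obtain ⟨w, hwF0, hw2⟩ := Finset.mem_image.mp ((F0.image Prod.snd).max'_mem hF0ne)
  have hwF : w ∈ F := (Finset.mem_filter.mp hwF0).1
  have hw1 : w.1 = r0 := (Finset.mem_filter.mp hwF0).2
  have hwent : T.entry w = T.entry c := (Finset.mem_filter.mp hwF).2
  have hwS : w ∈ T.supp := (Finset.mem_filter.mp hwF).1
  have main : ∀ y ∈ F, y = w ∨ NEcell w y := by
    intro y hyF
    have hy1 : r0 ≤ y.1 := Finset.min'_le _ _ (Finset.mem_image_of_mem _ hyF)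
    rcases eq_or_lt_of_le hy1 with heq | hlt
    · have hyF0 : y ∈ F0 := Finset.mem_filter.mpr ⟨hyF, heq.symm⟩
      have hy2 : y.2 ≤ j0 := Finset.le_max' _ _ (Finset.mem_image_of_mem _ hyF0)
      rcases eq_or_lt_of_le hy2 with heq2 | hlt2
      · left; exact prodext (by omega) (by omega)
      · right
        refine ⟨by omega, by omega, ?_⟩
        intro hwy
        rw [hwy] at hw2
        omega
    · right
      have hstrip : y.2 < w.2 :=
        aux_strip T hwS (Finset.mem_filter.mp hyF).1
          (by rw [hwent, (Finset.mem_filter.mp hyF).2]) (by omega)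
      refine ⟨by omega, by omega, ?_⟩
      intro hwy
      rw [hwy] at hstrip
      omega
  have hwsel : w ∈ selected T.entry T.supp := by
    rw [aux_mem_selected]
    refine ⟨hwS, ?_⟩
    intro z hz hze hNE
    have hzF : z ∈ F := Finset.mem_filter.mpr ⟨hz, by rw [hze, hwent]⟩
    rcases main z hzF with rfl | hNE2
    · exact hNE.2.2 rfl
    · exact hNE.2.2 (prodext (le_antisymm hNE.1 hNE2.1) (le_antisymm hNE2.2.1 hNE.2.1))
  exact ⟨w, hwsel, hwent, (main c hcF).imp Eq.symm id⟩

/-- There is at most one selected cell per entry value. -/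
lemma aux_sel_unique (T : LRTableau) {w w' : ℕ × ℕ} (hw : w ∈ selected T.entry T.supp)
    (hw' : w' ∈ selected T.entry T.supp) (he : T.entry w = T.entry w') : w = w' := by
  rw [aux_mem_selected] at hw hw'
  by_contra hne
  rcases Nat.lt_trichotomy w.1 w'.1 with h | h | h
  · have hs := aux_strip T hw.1 hw'.1 he h
    exact hw'.2 w hw.1 he ⟨h.le, hs.le, hne⟩
  · rcases Nat.lt_trichotomy w.2 w'.2 with h2 | h2 | h2
    · exact hw.2 w' hw'.1 he.symm ⟨h.ge, h2.le, fun hh => hne hh.symm⟩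
    · exact hne (prodext h h2)
    · exact hw'.2 w hw.1 he ⟨h.le, h2.le, hne⟩
  · have hs := aux_strip T hw'.1 hw.1 he.symm h
    exact hw.2 w' hw'.1 he.symm ⟨h.le, hs.le, fun hh => hne hh.symm⟩

/-- From a cell with entry `> n` one finds a cell with entry smaller by `n`, at least
`n` rows higher (iterated lattice condition). -/
lemma aux_occ_below (T : LRTableau) :
    ∀ n : ℕ, ∀ c : ℕ × ℕ, c ∈ T.supp → n < T.entry c →
      ∃ c' ∈ T.supp, T.entry c' + n = T.entry c ∧ c'.1 + n ≤ c.1 := by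
  intro n
  induction n with
  | zero => intro c hc _; exact ⟨c, hc, by omega, by omega⟩
  | succ n ih =>
    intro c hc hn
    obtain ⟨c', hc', he', hr'⟩ := ih c hc (by omega)
    have h2 : 2 ≤ T.entry c' := by omega
    have hlat := T.lattice (T.entry c') (c'.1 + 1) h2
    have hL : 0 < (T.supp.filter fun x => x.1 < c'.1 + 1 ∧ T.entry x = T.entry c').card :=
      Finset.card_pos.mpr ⟨c', Finset.mem_filter.mpr ⟨hc', by omega, rfl⟩⟩
    obtain ⟨c'', hc''⟩ := Finset.card_pos.mp (lt_of_lt_of_le hL hlat)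
    have h3 := Finset.mem_filter.mp hc''
    have h4 := h3.2.1
    have h5 := h3.2.2
    exact ⟨c'', h3.1, by omega, by omega⟩

/-- Rows of selected cells grow at least as fast as entries. -/
lemma aux_sel_row (T : LRTableau) {w w' : ℕ × ℕ} (hw : w ∈ selected T.entry T.supp)
    (hw' : w' ∈ selected T.entry T.supp) (he : T.entry w < T.entry w') :
    w.1 + (T.entry w' - T.entry w) ≤ w'.1 := by
  have hwS : w ∈ T.supp := (Finset.mem_filter.mp hw).1
  have hw'S : w' ∈ T.supp := (Finset.mem_filter.mp hw').1
  have hw0 : T.entry w ≠ 0 := (T.mem_supp w).mp hwS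
  obtain ⟨c'', hc'', he'', hr''⟩ :=
    aux_occ_below T (T.entry w' - T.entry w) w' hw'S (by omega)
  have hent : T.entry c'' = T.entry w := by omega
  have hle : w.1 ≤ c''.1 := by
    by_contra hcon
    push_neg at hcon
    have hs := aux_strip T hc'' hwS hent hcon
    exact (Finset.mem_filter.mp hw).2 c'' hc'' hent
      ⟨hcon.le, hs.le, fun hh => by rw [hh] at hcon; omega⟩
  omega

/-- Columns of selected cells weakly decrease as entries increase. -/
lemma aux_sel_col (T : LRTableau) {w w' : ℕ × ℕ} (hw : w ∈ selected T.entry T.supp)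
    (hw' : w' ∈ selected T.entry T.supp) (he : T.entry w < T.entry w') : w'.2 ≤ w.2 := by
  by_contra hcon
  push_neg at hcon
  have hwS : w ∈ T.supp := (Finset.mem_filter.mp hw).1
  have hw'S : w' ∈ T.supp := (Finset.mem_filter.mp hw').1
  have hrow := aux_sel_row T hw hw' he
  have hr1 : w.1 < w'.1 := by omega
  have hm : (w.1, w'.2) ∈ T.supp :=
    aux_cell_between T.skew (a := w.1) (i := w.2) (by simpa using hwS) (by simpa using hw'S)
      hcon.le le_rfl hr1.le
  have hchain := aux_col_chain T hr1.le hm (show (w'.1, w'.2) ∈ T.supp by simpa using hw'S)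
  have hweak := T.row_weak w.1 w.2 w'.2 hcon.le (by simpa using hwS) hm
  simp only [Prod.mk.eta] at hchain hweak
  have heq : T.entry (w.1, w'.2) = T.entry w := by omega
  exact (Finset.mem_filter.mp hw).2 (w.1, w'.2) hm heq
    ⟨le_rfl, hcon.le, fun hh => by
      have := congrArg Prod.snd hh
      simp only at this
      omega⟩

/-- A selected cell is the last cell of its row. -/
lemma aux_sel_row_end (T : LRTableau) {w : ℕ × ℕ} (hw : w ∈ selected T.entry T.supp)
    {i' : ℕ} (h2 : (w.1, i') ∈ T.supp) (hcol : w.2 < i') : False := by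
  have hwS : w ∈ T.supp := (Finset.mem_filter.mp hw).1
  have hweak : T.entry w ≤ T.entry (w.1, i') := by
    have := T.row_weak w.1 w.2 i' hcol.le (by simpa using hwS) h2
    simpa using this
  rcases eq_or_lt_of_le hweak with heq | hlt
  · exact (Finset.mem_filter.mp hw).2 (w.1, i') h2 heq.symm
      ⟨le_rfl, hcol.le, fun hh => by
        have := congrArg Prod.snd hh
        simp only at this
        omega⟩
  · have hw0 : T.entry w ≠ 0 := (T.mem_supp w).mp hwS
    obtain ⟨c'', hc'', he'', hr''⟩ :=
      aux_occ_below T (T.entry (w.1, i') - T.entry w) (w.1, i') h2 (by omega)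
    have hent : T.entry c'' = T.entry w := by omega
    simp only at hr''
    have hr : c''.1 < w.1 := by omega
    have hs := aux_strip T hc'' hwS hent hr
    exact (Finset.mem_filter.mp hw).2 c'' hc'' hent
      ⟨hr.le, hs.le, fun hh => by rw [hh] at hr; omega⟩

/-- The cell directly below a selected cell is selected. -/
lemma aux_sel_below (T : LRTableau) {w : ℕ × ℕ} (hw : w ∈ selected T.entry T.supp)
    (h2 : (w.1 + 1, w.2) ∈ T.supp) : (w.1 + 1, w.2) ∈ selected T.entry T.supp := by
  classical
  have hwS : w ∈ T.supp := (Finset.mem_filter.mp hw).1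
  have hev : T.entry w < T.entry (w.1 + 1, w.2) := by
    have := T.col_strict w.1 (w.1 + 1) w.2 (Nat.lt_succ_self _) (by simpa using hwS) h2
    simpa using this
  by_contra hns
  obtain ⟨w', hw', he', hor⟩ := aux_exists_sel T h2
  rcases hor with heqv | hNE
  · rw [heqv] at hw'
    exact hns hw'
  · have hcol : w'.2 ≤ w.2 := aux_sel_col T hw hw' (by omega)
    have hcol2 : w.2 ≤ w'.2 := by simpa using hNE.2.1
    have hfst : w'.1 ≤ w.1 + 1 := by simpa using hNE.1
    rcases eq_or_lt_of_le hfst with heq1 | hlt1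
    · exact hNE.2.2 (prodext (by simpa using heq1) (by omega))
    · have hw'S : w' ∈ T.supp := (Finset.mem_filter.mp hw').1
      have hs := aux_strip T hw'S h2 he' (by simpa using hlt1)
      simp only at hs
      omega

/-! ### The rows of selected cells in a fixed column -/

noncomputable def selColRows (T : LRTableau) (j : ℕ) : Finset ℕ :=
  ((selected T.entry T.supp).filter (fun c => c.2 = j)).image Prod.fst

noncomputable def selMin (T : LRTableau) (j : ℕ) : ℕ :=
  if h : (selColRows T j).Nonempty then (selColRows T j).min' h else T.supp.sup Prod.fst + 1

lemma mem_selColRows {T : LRTableau} {j r : ℕ} :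
    r ∈ selColRows T j ↔ ∃ z ∈ selected T.entry T.supp, z.2 = j ∧ z.1 = r := by
  simp only [selColRows, Finset.mem_image, Finset.mem_filter]
  constructor
  · rintro ⟨z, ⟨hz, hz2⟩, hz1⟩; exact ⟨z, hz, hz2, hz1⟩
  · rintro ⟨z, hz, hz2, hz1⟩; exact ⟨z, ⟨hz, hz2⟩, hz1⟩

lemma selMin_le (T : LRTableau) {z : ℕ × ℕ} (hz : z ∈ selected T.entry T.supp) :
    selMin T z.2 ≤ z.1 := by
  have hne : (selColRows T z.2).Nonempty := ⟨z.1, mem_selColRows.mpr ⟨z, hz, rfl, rfl⟩⟩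
  rw [selMin, dif_pos hne]
  exact Finset.min'_le _ _ (mem_selColRows.mpr ⟨z, hz, rfl, rfl⟩)

lemma selMin_mem (T : LRTableau) {j : ℕ} (hne : (selColRows T j).Nonempty) :
    (selMin T j, j) ∈ selected T.entry T.supp := by
  rw [selMin, dif_pos hne]
  obtain ⟨z, hz, hz2, hz1⟩ := mem_selColRows.mp ((selColRows T j).min'_mem hne)
  have : ((selColRows T j).min' hne, j) = z := prodext (by rw [hz1]) (by rw [hz2])
  rw [this]
  exact hz

lemma selMin_big (T : LRTableau) {j : ℕ} (hemp : ¬ (selColRows T j).Nonempty) :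
    selMin T j = T.supp.sup Prod.fst + 1 := dif_neg hemp

lemma selMin_le_big (T : LRTableau) (j : ℕ) : selMin T j ≤ T.supp.sup Prod.fst + 1 := by
  by_cases hne : (selColRows T j).Nonempty
  · have hu := selMin_mem T hne
    have huS : (selMin T j, j) ∈ T.supp := (Finset.mem_filter.mp hu).1
    have := Finset.le_sup (f := Prod.fst) huS
    simp only at this
    omega
  · rw [selMin_big T hne]

/-- Characterization of selected cells within a column: the selected cells are exactly
the cells at rows `≥ selMin`. -/
lemma sel_iff_selMin (T : LRTableau) {a j : ℕ} (ha : (a, j) ∈ T.supp) :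
    (a, j) ∈ selected T.entry T.supp ↔ selMin T j ≤ a := by
  constructor
  · intro h
    exact selMin_le (z := (a, j)) T h
  · intro h
    by_cases hne : (selColRows T j).Nonempty
    · have hu := selMin_mem T hne
      have huS : (selMin T j, j) ∈ T.supp := (Finset.mem_filter.mp hu).1
      have key : ∀ b, selMin T j ≤ b → b ≤ a → (b, j) ∈ selected T.entry T.supp := by
        intro b hb
        induction b, hb using Nat.le_induction with
        | base => intro _; exact hu
        | succ n hn ih =>
          intro hna
          have hsel1 : (n, j) ∈ selected T.entry T.supp := ih (by omega)
          have hS1 : (n + 1, j) ∈ T.supp :=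
            aux_cell_between T.skew huS ha le_rfl (by omega) (by omega)
          exact aux_sel_below T hsel1 hS1
      exact key a h le_rfl
    · rw [selMin_big T hne] at h
      exact absurd h (by
        have := Finset.le_sup (f := Prod.fst) ha
        simp only at this
        omega)


/-! ### The peeled diagram is skew -/

/-- The peel of the support of an LR tableau is again a skew diagram. -/
lemma peel_skew (T : LRTableau) : IsSkewDiagram (peel T.entry T.supp) := by
  classical
  obtain ⟨dd, ff, hdd, hff, hdf, hmem⟩ := T.skew
  -- membership in the peel, column by column
  have hpeel : ∀ a j : ℕ,
      ((a, j) ∈ peel T.entry T.supp) ↔ dd j ≤ a ∧ a < min (ff j) (selMin T j) := by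
    intro a j
    rw [peel, Finset.mem_sdiff]
    constructor
    · rintro ⟨hS, hns⟩
      have h1 : dd j ≤ a ∧ a < ff j := (hmem (a, j)).mp hS
      have h2 : ¬ selMin T j ≤ a := fun hh => hns ((sel_iff_selMin T hS).mpr hh)
      exact ⟨h1.1, by omega⟩
    · rintro ⟨h1, h2⟩
      have hS : (a, j) ∈ T.supp := (hmem (a, j)).mpr ⟨h1, (by omega : a < ff j)⟩
      exact ⟨hS, fun hs => by have := (sel_iff_selMin T hS).mp hs; omega⟩
  -- antitonicity of the cut-off
  have hQ1 : ∀ j j' : ℕ, j ≤ j' →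
      min (ff j') (selMin T j') ≤ min (ff j) (selMin T j) := by
    intro j j' hjj
    rcases eq_or_lt_of_le hjj with rfl | hlt
    · exact le_rfl
    have hffj : ff j' ≤ ff j := hff hjj
    by_cases hne : (selColRows T j).Nonempty
    · have hu := selMin_mem T hne
      have huS : (selMin T j, j) ∈ T.supp := (Finset.mem_filter.mp hu).1
      have hr0 : dd j ≤ selMin T j ∧ selMin T j < ff j := (hmem (selMin T j, j)).mp huS
      have hffj' : ff j' ≤ selMin T j := by
        by_contra hcon
        push_neg at hcon
        have hin : (selMin T j, j') ∈ T.supp :=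
          (hmem (selMin T j, j')).mpr ⟨le_trans (hdd hjj) hr0.1, (hcon : selMin T j < ff j')⟩
        exact aux_sel_row_end T hu hin hlt
      have hb := selMin_le_big T j'
      have hbj := selMin_le_big T j
      omega
    · have hbig := selMin_big T hne
      have hb := selMin_le_big T j'
      omega
  set N : Finset ℕ := (peel T.entry T.supp).image Prod.snd with hN
  have hNmem : ∀ j, j ∈ N ↔ dd j < min (ff j) (selMin T j) := by
    intro j
    simp only [hN, Finset.mem_image]
    constructor
    · rintro ⟨c, hc, rfl⟩
      have hc' : (c.1, c.2) ∈ peel T.entry T.supp := by simpa using hc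
      have := (hpeel c.1 c.2).mp hc'
      omega
    · intro h
      exact ⟨(dd j, j), (hpeel (dd j) j).mpr ⟨le_rfl, by omega⟩, rfl⟩
  set gB : ℕ → ℕ :=
    fun j => (N.filter (fun j' => j ≤ j')).sup (fun j' => min (ff j') (selMin T j')) with hgB
  have hgB_mono : ∀ i i' : ℕ, i ≤ i' → gB i' ≤ gB i := by
    intro i i' h
    apply Finset.sup_mono
    intro x hx
    simp only [Finset.mem_filter] at hx ⊢
    exact ⟨hx.1, le_trans h hx.2⟩
  have hgB_le : ∀ i : ℕ, ∀ X : ℕ, (∀ j'' ∈ N, i ≤ j'' → min (ff j'') (selMin T j'') ≤ X) →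
      gB i ≤ X := by
    intro i X hX
    apply Finset.sup_le
    intro j'' hj''
    simp only [Finset.mem_filter] at hj''
    exact hX j'' hj''.1 hj''.2
  have hgB_ge : ∀ i ∈ N, min (ff i) (selMin T i) ≤ gB i := by
    intro i hi
    exact Finset.le_sup (f := fun j' => min (ff j') (selMin T j'))
      (Finset.mem_filter.mpr ⟨hi, le_rfl⟩)
  have hgB_eq : ∀ i ∈ N, gB i = min (ff i) (selMin T i) := by
    intro i hi
    refine le_antisymm (hgB_le i _ ?_) (hgB_ge i hi)
    intro j'' _ hij
    exact hQ1 i j'' hij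
  refine ⟨fun j => if dd j < min (ff j) (selMin T j) then dd j else gB j, gB, ?_, ?_, ?_, ?_⟩
  · -- dd₂ antitone
    intro i i' h
    dsimp only
    by_cases h1 : dd i' < min (ff i') (selMin T i') <;>
      by_cases h2 : dd i < min (ff i) (selMin T i) <;> simp only [h1, h2, if_pos, if_neg,
        if_true, if_false]
    · exact hdd h
    · have h3 : min (ff i') (selMin T i') ≤ gB i :=
        Finset.le_sup (f := fun j' => min (ff j') (selMin T j'))
          (Finset.mem_filter.mpr ⟨(hNmem i').mpr h1, h⟩)
      omega
    · refine hgB_le i' (dd i) ?_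
      intro j'' hj'' hij
      have := hQ1 i' j'' hij
      have h4 := hdd h
      omega
    · exact hgB_mono i i' h
  · exact fun i i' h => hgB_mono i i' h
  · intro i
    dsimp only
    by_cases h1 : dd i < min (ff i) (selMin T i) <;> simp only [h1, if_true, if_false,
      if_pos, if_neg]
    · have := hgB_ge i ((hNmem i).mpr h1)
      omega
    · exact le_rfl
  · rintro ⟨a, j⟩
    dsimp only
    rw [hpeel a j]
    by_cases h1 : dd j < min (ff j) (selMin T j) <;> simp only [h1, if_true, if_false,
      if_pos, if_neg]
    · rw [hgB_eq j ((hNmem j).mpr h1)]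
    · constructor
      · intro hh; omega
      · intro hh
        have h2 : gB j ≤ dd j := by
          refine hgB_le j (dd j) ?_
          intro j'' hj'' hij
          have := hQ1 j j'' hij
          omega
        omega

/-! ### The peeled filling satisfies the lattice condition -/

lemma peel_lattice (T : LRTableau) (m p : ℕ) (hm : 2 ≤ m) :
    ((peel T.entry T.supp).filter fun c => c.1 < p ∧ T.entry c = m).card ≤
      ((peel T.entry T.supp).filter fun c => c.1 + 1 < p ∧ T.entry c = m - 1).card := by
  classical
  have e1 : (peel T.entry T.supp).filter (fun c => c.1 < p ∧ T.entry c = m)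
      = (T.supp.filter fun c => c.1 < p ∧ T.entry c = m)
        \ ((selected T.entry T.supp).filter fun c => c.1 < p ∧ T.entry c = m) := by
    ext c
    simp only [peel, Finset.mem_sdiff, Finset.mem_filter]
    tauto
  have e2 : (peel T.entry T.supp).filter (fun c => c.1 + 1 < p ∧ T.entry c = m - 1)
      = (T.supp.filter fun c => c.1 + 1 < p ∧ T.entry c = m - 1)
        \ ((selected T.entry T.supp).filter fun c => c.1 + 1 < p ∧ T.entry c = m - 1) := by
    ext c
    simp only [peel, Finset.mem_sdiff, Finset.mem_filter]
    tauto
  have hsub : selected T.entry T.supp ⊆ T.supp := Finset.filter_subset _ _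
  rw [e1, e2,
    Finset.card_sdiff_of_subset (Finset.filter_subset_filter _ hsub),
    Finset.card_sdiff_of_subset (Finset.filter_subset_filter _ hsub)]
  have hA := T.lattice m p hm
  have hsm1le : ((selected T.entry T.supp).filter fun c => c.1 + 1 < p ∧ T.entry c = m - 1).card
      ≤ (T.supp.filter fun c => c.1 + 1 < p ∧ T.entry c = m - 1).card :=
    Finset.card_le_card (Finset.filter_subset_filter _ (Finset.filter_subset _ _))
  have hsm1 : ((selected T.entry T.supp).filter fun c => c.1 + 1 < p ∧ T.entry c = m - 1).card
      ≤ 1 := by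
    refine Finset.card_le_one.mpr ?_
    intro x hx y hy
    have hx' := Finset.mem_filter.mp hx
    have hy' := Finset.mem_filter.mp hy
    exact aux_sel_unique T hx'.1 hy'.1 (by rw [hx'.2.2, hy'.2.2])
  rcases Nat.eq_zero_or_pos (T.supp.filter fun c => c.1 < p ∧ T.entry c = m).card with h0 | h0
  · omega
  · obtain ⟨c, hc⟩ := Finset.card_pos.mp h0
    have hc' := Finset.mem_filter.mp hc
    obtain ⟨w, hw, hwe, hor⟩ := aux_exists_sel T hc'.1
    have hw1 : w.1 ≤ c.1 := by
      rcases hor with rfl | hNE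
      · exact le_rfl
      · exact hNE.1
    have hsm : 0 < ((selected T.entry T.supp).filter fun c => c.1 < p ∧ T.entry c = m).card :=
      Finset.card_pos.mpr ⟨w, Finset.mem_filter.mpr ⟨hw, by omega, by rw [hwe, hc'.2.2]⟩⟩
    have hsmle : ((selected T.entry T.supp).filter fun c => c.1 < p ∧ T.entry c = m).card
        ≤ 1 := by
      refine Finset.card_le_one.mpr ?_
      intro x hx y hy
      have hx' := Finset.mem_filter.mp hx
      have hy' := Finset.mem_filter.mp hy
      exact aux_sel_unique T hx'.1 hy'.1 (by rw [hx'.2.2, hy'.2.2])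
    omega

/-- Removing from an LR tableau `T` the cells `C_1(1), …, C_1(ℓ_0)`
(keeping all other cells with their entries) yields again an LR tableau: the remaining
cells form a skew Young diagram, the filling is semistandard (LR1), and it satisfies
the lattice condition (LR2). -/
theorem peel_isLRTableau (T : LRTableau) :
    ∃ T' : LRTableau,
      T'.supp = peel T.entry T.supp ∧
      T'.entry = fun c => if c ∈ peel T.entry T.supp then T.entry c else 0 := by
  classical
  refine ⟨{ entry := fun c => if c ∈ peel T.entry T.supp then T.entry c else 0,
            supp := peel T.entry T.supp,
            mem_supp := ?_, skew := peel_skew T,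
            row_weak := ?_, col_strict := ?_, lattice := ?_ }, rfl, rfl⟩
  · intro c
    by_cases h : c ∈ peel T.entry T.supp <;> simp only [h, if_true, if_false, if_pos, if_neg]
    · have hS : c ∈ T.supp := (Finset.mem_sdiff.mp h).1
      simpa [h] using (T.mem_supp c).mp hS
    · simp [h]
  · intro a i i' hii h1 h2
    simp only [h1, h2, if_pos]
    exact T.row_weak a i i' hii (Finset.mem_sdiff.mp h1).1 (Finset.mem_sdiff.mp h2).1
  · intro a a' i haa h1 h2
    simp only [h1, h2, if_pos]
    exact T.col_strict a a' i haa (Finset.mem_sdiff.mp h1).1 (Finset.mem_sdiff.mp h2).1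
  · intro m p hm
    refine le_trans (le_of_eq ?_) (le_trans (peel_lattice T m p hm) (le_of_eq ?_))
    · apply congrArg Finset.card
      apply Finset.filter_congr
      intro c hc
      simp [hc]
    · apply congrArg Finset.card
      apply Finset.filter_congr
      intro c hc
      simp [hc]

end HTW
end

section
/- Let T be a Littlewood–Richardson tableau of shape F^t − D^t with content E^t, and let m_{ih}(T) be the number of cells removed at the h-th step of the standard peeling of T that lie in the i-th column of F^t. Then for all 1 ≤ i < s and all 1 ≤ k ≤ t: Σ_{j=k+1}^{t} m_{ji}(T) ≥ Σ_{j=k}^{t} m_{j,i+1}(T). In particular, letting i(h) denote the largest index i with m_{ih}(T) > 0 (the rightmost column of F^t receiving a cell from the h-th peeling step), the function h ↦ i(h) is strictly decreasing. -/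
open MvPolynomial Matrix Finset

namespace HTW

/-! ## Auxiliary lemmas for the standard peeling -/

lemma same_col_eq (T : LRTableau) {c c' : ℕ × ℕ} (hc : c ∈ T.supp) (hc' : c' ∈ T.supp)
    (he : T.entry c = T.entry c') (h2 : c.2 = c'.2) : c = c' := by
  obtain ⟨a, i⟩ := c
  obtain ⟨a', i'⟩ := c'
  have h2' : i = i' := h2
  subst h2'
  rcases lt_trichotomy a a' with h | h | h
  · exact absurd he (T.col_strict a a' i h hc hc').ne
  · rw [h]
  · exact absurd he.symm (T.col_strict a' a i h hc' hc).ne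

lemma strip (T : LRTableau) {c c' : ℕ × ℕ} (hc : c ∈ T.supp) (hc' : c' ∈ T.supp)
    (he : T.entry c = T.entry c') (h : c.1 < c'.1) : c'.2 < c.2 := by
  obtain ⟨a, i⟩ := c
  obtain ⟨a', i'⟩ := c'
  simp only at h ⊢
  by_contra hle
  push_neg at hle
  obtain ⟨dd, ff, hdd, _hff, _h0, hmem⟩ := T.skew
  have h1 := (hmem (a, i)).mp hc
  have h2 := (hmem (a', i')).mp hc'
  have hb : ((a, i') : ℕ × ℕ) ∈ T.supp := by
    rw [hmem]
    exact ⟨le_trans (hdd hle) h1.1, lt_trans h h2.2⟩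
  have hw := T.row_weak a i i' hle hc hb
  have hs := T.col_strict a a' i' h hb hc'
  omega

lemma selected_subset (ent : ℕ × ℕ → ℕ) (S : Finset (ℕ × ℕ)) : selected ent S ⊆ S :=
  Finset.filter_subset _ _

lemma mem_selected {ent : ℕ × ℕ → ℕ} {S : Finset (ℕ × ℕ)} {c : ℕ × ℕ} :
    c ∈ selected ent S ↔ c ∈ S ∧ ∀ c' ∈ S, ent c' = ent c → ¬ NEcell c' c :=
  Finset.mem_filter

lemma exists_selected (T : LRTableau) {S : Finset (ℕ × ℕ)} (hS : S ⊆ T.supp)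
    {c : ℕ × ℕ} (hc : c ∈ S) :
    ∃ c' ∈ selected T.entry S, T.entry c' = T.entry c ∧ c.2 ≤ c'.2 := by
  obtain ⟨c', hc'A, hmax⟩ := Finset.exists_max_image
    (S.filter fun b => T.entry b = T.entry c) (fun b => b.2)
    ⟨c, Finset.mem_filter.mpr ⟨hc, rfl⟩⟩
  obtain ⟨hc'S, hc'e⟩ := Finset.mem_filter.mp hc'A
  refine ⟨c', mem_selected.mpr ⟨hc'S, ?_⟩, hc'e, hmax c (Finset.mem_filter.mpr ⟨hc, rfl⟩)⟩
  intro c'' hc'' hee hne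
  have hc''A : c'' ∈ S.filter fun b => T.entry b = T.entry c :=
    Finset.mem_filter.mpr ⟨hc'', hee.trans hc'e⟩
  exact hne.2.2 (same_col_eq T (hS hc'') (hS hc'S) hee
    (le_antisymm (hmax c'' hc''A) hne.2.1))

lemma selected_unique (T : LRTableau) {S : Finset (ℕ × ℕ)} (hS : S ⊆ T.supp)
    {c1 c2 : ℕ × ℕ} (h1 : c1 ∈ selected T.entry S) (h2 : c2 ∈ selected T.entry S)
    (he : T.entry c1 = T.entry c2) : c1 = c2 := by
  by_contra hne
  obtain ⟨h1S, h1sel⟩ := mem_selected.mp h1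
  obtain ⟨h2S, h2sel⟩ := mem_selected.mp h2
  rcases lt_trichotomy c1.1 c2.1 with h | h | h
  · have hs := strip T (hS h1S) (hS h2S) he h
    exact h2sel c1 h1S he ⟨le_of_lt h, le_of_lt hs, hne⟩
  · rcases lt_trichotomy c1.2 c2.2 with hcol | hcol | hcol
    · exact h1sel c2 h2S he.symm ⟨le_of_eq h.symm, le_of_lt hcol, Ne.symm hne⟩
    · exact hne (same_col_eq T (hS h1S) (hS h2S) he hcol)
    · exact h2sel c1 h1S he ⟨le_of_eq h, le_of_lt hcol, hne⟩
  · have hs := strip T (hS h2S) (hS h1S) he.symm h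
    exact h1sel c2 h2S he.symm ⟨le_of_lt h, le_of_lt hs, Ne.symm hne⟩

lemma peel_step (T : LRTableau) {S : Finset (ℕ × ℕ)} (hS : S ⊆ T.supp) {c : ℕ × ℕ}
    (hc : c ∈ peel T.entry S) :
    ∃ c' ∈ selected T.entry S, T.entry c' = T.entry c ∧ c.2 < c'.2 := by
  rw [peel, Finset.mem_sdiff] at hc
  obtain ⟨hcS, hcn⟩ := hc
  obtain ⟨c', hsel, hee, hle⟩ := exists_selected T hS hcS
  refine ⟨c', hsel, hee, lt_of_le_of_ne hle ?_⟩
  intro heq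
  have hcc : c = c' := same_col_eq T (hS hcS) (hS (selected_subset _ _ hsel)) hee.symm heq
  exact hcn (hcc ▸ hsel)

lemma iterate_peel_subset (ent : ℕ × ℕ → ℕ) (S : Finset (ℕ × ℕ)) (h : ℕ) :
    (peel ent)^[h] S ⊆ S := by
  induction h with
  | zero => simp
  | succ n ih =>
    rw [Function.iterate_succ_apply']
    exact subset_trans Finset.sdiff_subset ih

lemma iterate_peel_le (ent : ℕ × ℕ → ℕ) (S : Finset (ℕ × ℕ)) {m n : ℕ} (h : m ≤ n) :
    (peel ent)^[n] S ⊆ (peel ent)^[m] S := by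
  obtain ⟨k, rfl⟩ := Nat.exists_eq_add_of_le h
  rw [add_comm, Function.iterate_add_apply]
  exact iterate_peel_subset ent _ k

lemma col_lt_of_shape {r s t : ℕ} {d : Fin r → ℕ} {e : Fin s → ℕ} {f : Fin t → ℕ}
    (T : LRTableau) (hT : IsLRofShape T d e f) {c : ℕ × ℕ} (hc : c ∈ T.supp) :
    c.2 < t := by
  rw [hT.1, shape, Finset.mem_filter, Finset.mem_product, Finset.mem_range,
    Finset.mem_range] at hc
  exact hc.1.2

lemma sum_filter_card (A : Finset (ℕ × ℕ)) (K tt : ℕ) (hA : ∀ c ∈ A, c.2 < tt) :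
    ∑ j ∈ Finset.Ico K tt, (A.filter fun c => c.2 = j).card
      = (A.filter fun c => K ≤ c.2).card := by
  have hfib := Finset.card_eq_sum_card_fiberwise
    (s := A.filter fun c => K ≤ c.2) (t := Finset.Ico K tt) (f := fun c => c.2)
    (fun c hc => by
      rw [Finset.mem_coe, Finset.mem_filter] at hc
      exact Finset.mem_Ico.mpr ⟨hc.2, hA c hc.1⟩)
  rw [hfib]
  refine Finset.sum_congr rfl fun j hj => ?_
  rw [Finset.mem_Ico] at hj
  congr 1
  rw [Finset.filter_filter]
  apply Finset.filter_congr
  intro c _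
  constructor
  · intro h; exact ⟨h ▸ hj.1, h⟩
  · rintro ⟨_, h⟩; exact h

/-- For an LR tableau `T` of shape `F^t − D^t` and content `E^t`,
the peeling multiplicities `m_{ih}(T)` satisfy, for all `1 ≤ i < s` and `1 ≤ k ≤ t`
(stated here 0-based), `Σ_{j=k+1}^{t} m_{ji} ≥ Σ_{j=k}^{t} m_{j,i+1}`.  In particular
the rightmost column `i(h)` of `F^t` receiving a cell at the `h`-th peeling step is
strictly decreasing in `h`. -/
theorem peelCount_inequalities
    {r s t : ℕ} (d : Fin r → ℕ) (e : Fin s → ℕ) (f : Fin t → ℕ)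
    (hd : Antitone d) (he : Antitone e) (hf : Antitone f)
    (hdpos : ∀ i, 0 < d i) (hepos : ∀ i, 0 < e i) (hfpos : ∀ j, 0 < f j)
    (hsum : (∑ i, d i) + (∑ i, e i) = ∑ j, f j)
    (hdf : ∀ j : ℕ, ext d j ≤ ext f j)
    (T : LRTableau) (hT : IsLRofShape T d e f) :
    (∀ i : ℕ, i + 1 < s → ∀ K : ℕ, K < t →
      (∑ j ∈ Finset.Ico K t, peelCount T j (i + 1)) ≤
        ∑ j ∈ Finset.Ico (K + 1) t, peelCount T j i) ∧
    (∀ h1 h2 : ℕ, h1 < h2 → h2 < s → ∀ i1 i2 : ℕ,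
      (0 < peelCount T i1 h1 ∧ ∀ i', 0 < peelCount T i' h1 → i' ≤ i1) →
      (0 < peelCount T i2 h2 ∧ ∀ i', 0 < peelCount T i' h2 → i' ≤ i2) →
      i2 < i1) := by
  classical
  have colbound : ∀ c ∈ T.supp, c.2 < t := fun c hc => col_lt_of_shape T hT hc
  constructor
  · intro i _ K _
    have hS0sub : (peel T.entry)^[i] T.supp ⊆ T.supp := iterate_peel_subset _ _ _
    have hS1sub : (peel T.entry)^[i+1] T.supp ⊆ T.supp := iterate_peel_subset _ _ _
    have hsel1 : selected T.entry ((peel T.entry)^[i+1] T.supp) ⊆ T.supp :=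
      subset_trans (selected_subset _ _) hS1sub
    have hsel0 : selected T.entry ((peel T.entry)^[i] T.supp) ⊆ T.supp :=
      subset_trans (selected_subset _ _) hS0sub
    have hL : (∑ j ∈ Finset.Ico K t, peelCount T j (i+1))
        = ((selected T.entry ((peel T.entry)^[i+1] T.supp)).filter
            fun c => K ≤ c.2).card := by
      unfold peelCount
      exact sum_filter_card _ _ _ (fun c hc => colbound c (hsel1 hc))
    have hR : (∑ j ∈ Finset.Ico (K+1) t, peelCount T j i)
        = ((selected T.entry ((peel T.entry)^[i] T.supp)).filter
            fun c => K+1 ≤ c.2).card := by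
      unfold peelCount
      exact sum_filter_card _ _ _ (fun c hc => colbound c (hsel0 hc))
    rw [hL, hR]
    have key : ∀ c ∈ (selected T.entry ((peel T.entry)^[i+1] T.supp)).filter
        (fun c => K ≤ c.2),
        ∃ c', c' ∈ selected T.entry ((peel T.entry)^[i] T.supp) ∧
          T.entry c' = T.entry c ∧ c.2 < c'.2 := by
      intro c hc
      rw [Finset.mem_filter] at hc
      have hcS1 : c ∈ (peel T.entry)^[i+1] T.supp := selected_subset _ _ hc.1
      rw [Function.iterate_succ_apply'] at hcS1
      obtain ⟨c', h1, h2, h3⟩ := peel_step T hS0sub hcS1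
      exact ⟨c', h1, h2, h3⟩
    set φ : ℕ × ℕ → ℕ × ℕ := fun c =>
      if h : ∃ c', c' ∈ selected T.entry ((peel T.entry)^[i] T.supp) ∧
          T.entry c' = T.entry c ∧ c.2 < c'.2
      then h.choose else c with hφ
    have hφeq : ∀ c, ∀ hc : c ∈ (selected T.entry ((peel T.entry)^[i+1] T.supp)).filter
        (fun c => K ≤ c.2), φ c = (key c hc).choose := by
      intro c hc
      simp only [hφ, dif_pos (key c hc)]
    apply Finset.card_le_card_of_injOn φ
    · intro c hc
      have hex := key c hc
      have hspec := hex.choose_spec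
      have hKc : K ≤ c.2 := (Finset.mem_filter.mp hc).2
      rw [hφeq c hc, Finset.mem_coe, Finset.mem_filter]
      exact ⟨hspec.1, by omega⟩
    · intro c1 hc1 c2 hc2 heq
      rw [Finset.mem_coe] at hc1 hc2
      rw [hφeq c1 hc1, hφeq c2 hc2] at heq
      have s1 := (key c1 hc1).choose_spec
      have s2 := (key c2 hc2).choose_spec
      have he12 : T.entry c1 = T.entry c2 := by
        rw [← s1.2.1, ← s2.2.1, heq]
      exact selected_unique T hS1sub (Finset.mem_filter.mp hc1).1
        (Finset.mem_filter.mp hc2).1 he12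
  · intro h1 h2 hlt _ i1 i2 hp1 hp2
    obtain ⟨hpos1, hmax1⟩ := hp1
    obtain ⟨hpos2, _⟩ := hp2
    unfold peelCount at hpos2
    obtain ⟨c, hc⟩ := Finset.card_pos.mp hpos2
    rw [Finset.mem_filter] at hc
    obtain ⟨hcsel, hci2⟩ := hc
    have hcR : c ∈ (peel T.entry)^[h2] T.supp := selected_subset _ _ hcsel
    have hc1 : c ∈ peel T.entry ((peel T.entry)^[h1] T.supp) := by
      have hh := iterate_peel_le T.entry T.supp (show h1 + 1 ≤ h2 by omega) hcR
      rwa [Function.iterate_succ_apply'] at hh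
    obtain ⟨c', hsel', he', hlt'⟩ := peel_step T (iterate_peel_subset _ _ _) hc1
    have hpos' : 0 < peelCount T c'.2 h1 := by
      unfold peelCount
      exact Finset.card_pos.mpr ⟨c', Finset.mem_filter.mpr ⟨hsel', rfl⟩⟩
    have := hmax1 c'.2 hpos'
    omega


end HTW
end

section
/- Let T be a Littlewood–Richardson tableau of shape F^t − D^t with content E^t (with d_j ≤ f_j for all j). Then the monomial e_1(T) = ∏_{h=1}^{s} y_{a_h,1} divides e(T); the quotient e(T)/e_1(T) involves only variables y_{ac} with c ≥ 2; and e_1(T) equals the product of the factors y_{a(b),1} of e(T) taken over the boxes b of T containing the entry 1. In particular, for each h, a_h is the row of F^t containing the box into which the entry 1 of the h-th column of the banal tableau BE^t is placed by the inverse of the standard peeling, namely the topmost box of the i(h)-th column of F^t − D^t. -/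
open MvPolynomial Matrix Finset

namespace HTW

/-! ## Auxiliary machinery for the peeling analysis -/

/-- The set of cells of `T` with the same entry as `c`, strictly to the right of `c`. -/
def Rset (T : LRTableau) (c : ℕ × ℕ) : Finset (ℕ × ℕ) :=
  T.supp.filter fun c' => T.entry c' = T.entry c ∧ c.2 < c'.2

/-- The number of same-entry cells strictly to the right of `c`. -/
def rr (T : LRTableau) (c : ℕ × ℕ) : ℕ := (Rset T c).card

lemma mem_Rset (T : LRTableau) (c x : ℕ × ℕ) :
    x ∈ Rset T c ↔ x ∈ T.supp ∧ T.entry x = T.entry c ∧ c.2 < x.2 :=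
  Finset.mem_filter

/-- Horizontal strip property: same-entry cells go weakly up as the column grows. -/
lemma hstrip (T : LRTableau) {c c' : ℕ × ℕ} (hc : c ∈ T.supp) (hc' : c' ∈ T.supp)
    (he : T.entry c' = T.entry c) (hlt : c.2 < c'.2) : c'.1 ≤ c.1 := by
  obtain ⟨a, i⟩ := c
  obtain ⟨b, i'⟩ := c'
  simp only at hlt ⊢
  by_contra hab
  push_neg at hab
  obtain ⟨dd, ff, hdd, hff, _, hch⟩ := T.skew
  have hmid : (a, i') ∈ T.supp := by
    rw [hch]
    exact ⟨le_trans (hdd (le_of_lt hlt)) ((hch (a, i)).mp hc).1,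
      lt_trans hab ((hch (b, i')).mp hc').2⟩
  have h1 := T.col_strict a b i' hab hmid hc'
  have h2 := T.row_weak a i i' (le_of_lt hlt) hc hmid
  omega

/-- Two distinct same-entry cells lie in distinct columns. -/
lemma col_ne (T : LRTableau) {c c' : ℕ × ℕ} (hc : c ∈ T.supp) (hc' : c' ∈ T.supp)
    (he : T.entry c' = T.entry c) (hne : c' ≠ c) : c'.2 ≠ c.2 := by
  intro heq
  obtain ⟨a, i⟩ := c
  obtain ⟨b, i'⟩ := c'
  simp only at heq
  subst heq
  have hab : a ≠ b := by rintro rfl; exact hne rfl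
  rcases lt_or_gt_of_ne hab with h | h
  · have := T.col_strict a b i' h hc hc'; omega
  · have := T.col_strict b a i' h hc' hc; omega

lemma rr_lt_of_col_lt (T : LRTableau) {c c' : ℕ × ℕ} (hc : c ∈ T.supp) (hc' : c' ∈ T.supp)
    (he : T.entry c' = T.entry c) (hlt : c.2 < c'.2) : rr T c' < rr T c := by
  apply Finset.card_lt_card
  rw [Finset.ssubset_iff_of_subset]
  · exact ⟨c', (mem_Rset T c c').mpr ⟨hc', he, hlt⟩,
      fun hmem => absurd ((mem_Rset T c' c').mp hmem).2.2 (lt_irrefl _)⟩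
  · intro x hx
    rw [mem_Rset] at hx ⊢
    exact ⟨hx.1, hx.2.1.trans he, hlt.trans hx.2.2⟩

lemma eq_of_rr_eq (T : LRTableau) {c c' : ℕ × ℕ} (hc : c ∈ T.supp) (hc' : c' ∈ T.supp)
    (he : T.entry c' = T.entry c) (hrr : rr T c' = rr T c) : c' = c := by
  by_contra hne
  have hcol := col_ne T hc hc' he hne
  rcases lt_or_gt_of_ne hcol with h | h
  · have := rr_lt_of_col_lt T hc' hc he.symm h; omega
  · have := rr_lt_of_col_lt T hc hc' he h; omega

lemma rr_lt_card (T : LRTableau) {c : ℕ × ℕ} (hc : c ∈ T.supp) :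
    rr T c < (T.supp.filter fun x => T.entry x = T.entry c).card := by
  apply Finset.card_lt_card
  rw [Finset.ssubset_iff_of_subset]
  · exact ⟨c, Finset.mem_filter.mpr ⟨hc, rfl⟩,
      fun hmem => absurd ((mem_Rset T c c).mp hmem).2.2 (lt_irrefl _)⟩
  · intro x hx
    rw [mem_Rset] at hx
    exact Finset.mem_filter.mpr ⟨hx.1, hx.2.1⟩

lemma exists_rr (T : LRTableau) (v j : ℕ)
    (hj : j < (T.supp.filter fun x => T.entry x = v).card) :
    ∃ c ∈ T.supp, T.entry c = v ∧ rr T c = j := by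
  set A := T.supp.filter fun x => T.entry x = v with hA
  have hinj : Set.InjOn (rr T) A := by
    intro x hx y hy hxy
    rw [hA, Finset.coe_filter, Set.mem_setOf_eq] at hx hy
    exact eq_of_rr_eq T hy.1 hx.1 (hx.2.trans hy.2.symm) hxy
  have himg : A.image (rr T) = Finset.range A.card := by
    apply Finset.eq_of_subset_of_card_le
    · intro m hm
      obtain ⟨c, hcA, rfl⟩ := Finset.mem_image.mp hm
      rw [hA, Finset.mem_filter] at hcA
      rw [Finset.mem_range]
      have := rr_lt_card T hcA.1
      rwa [hcA.2] at this
    · rw [Finset.card_range, Finset.card_image_of_injOn hinj]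
  have : j ∈ A.image (rr T) := by
    rw [himg, Finset.mem_range]; exact hj
  obtain ⟨c, hcA, hcj⟩ := Finset.mem_image.mp this
  rw [hA, Finset.mem_filter] at hcA
  exact ⟨c, hcA.1, hcA.2, hcj⟩

lemma exists_right_high (T : LRTableau) {c : ℕ × ℕ} (hc : c ∈ T.supp) {h : ℕ}
    (hrr : h < rr T c) :
    ∃ c' ∈ T.supp, T.entry c' = T.entry c ∧ c.2 < c'.2 ∧ h ≤ rr T c' := by
  have hne : (Rset T c).Nonempty := Finset.card_pos.mp (by unfold rr at hrr; omega)
  obtain ⟨c', hc'mem, hmin⟩ := Finset.exists_min_image (Rset T c) (fun x => x.2) hne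
  have hc'p := (mem_Rset T c c').mp hc'mem
  refine ⟨c', hc'p.1, hc'p.2.1, hc'p.2.2, ?_⟩
  have hsub : Rset T c \ {c'} ⊆ Rset T c' := by
    intro x hx
    rw [Finset.mem_sdiff, Finset.mem_singleton] at hx
    obtain ⟨hxR, hxne⟩ := hx
    have hxp := (mem_Rset T c x).mp hxR
    rw [mem_Rset]
    refine ⟨hxp.1, hxp.2.1.trans hc'p.2.1.symm, ?_⟩
    have h1 := hmin x hxR
    have h2 := col_ne T hc'p.1 hxp.1 (hxp.2.1.trans hc'p.2.1.symm) hxne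
    omega
  have hcard := Finset.card_le_card hsub
  have hsd : (Rset T c \ {c'}).card = rr T c - 1 := by
    rw [Finset.card_sdiff_of_subset (Finset.singleton_subset_iff.mpr hc'mem), Finset.card_singleton]; rfl
  unfold rr at *
  omega

lemma selected_subset_eq (T : LRTableau) (S : Finset (ℕ × ℕ)) (hS : S ⊆ T.supp) :
    selected T.entry S = S.filter fun c => ∀ c' ∈ S, T.entry c' = T.entry c → ¬ c.2 < c'.2 := by
  unfold selected
  apply Finset.filter_congr
  intro c hcS
  constructor
  · intro hall c' hc' he hlt
    exact hall c' hc' he ⟨hstrip T (hS hcS) (hS hc') he hlt, hlt.le,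
      by rintro rfl; exact lt_irrefl _ hlt⟩
  · intro hno c' hc' he hNE
    obtain ⟨h1, h2, h3⟩ := hNE
    rcases eq_or_lt_of_le h2 with heq | hlt
    · exact col_ne T (hS hcS) (hS hc') he h3 heq.symm
    · exact hno c' hc' he hlt

lemma peel_iterate (T : LRTableau) (h : ℕ) :
    (peel T.entry)^[h] T.supp = T.supp.filter fun c => h ≤ rr T c := by
  induction h with
  | zero => simp
  | succ m ih =>
    rw [Function.iterate_succ_apply', ih]
    unfold peel
    rw [selected_subset_eq T _ (Finset.filter_subset _ _)]
    ext c
    simp only [Finset.mem_sdiff, Finset.mem_filter, not_and]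
    constructor
    · rintro ⟨⟨hcs, hm⟩, hnot⟩
      refine ⟨hcs, ?_⟩
      by_contra hle
      have hrc : rr T c = m := by omega
      have := hnot ⟨hcs, hm⟩
      push_neg at this
      obtain ⟨c', hc'mem, he, hlt⟩ := this
      have := rr_lt_of_col_lt T hcs hc'mem.1 he hlt
      omega
    · rintro ⟨hcs, hm⟩
      refine ⟨⟨hcs, by omega⟩, ?_⟩
      intro _ hall
      obtain ⟨c', hc's, he, hcol, hrrc'⟩ := exists_right_high T hcs (show m < rr T c by omega)
      exact hall c' ⟨hc's, hrrc'⟩ he hcol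

lemma selected_step (T : LRTableau) (h : ℕ) :
    selected T.entry ((peel T.entry)^[h] T.supp) = T.supp.filter fun c => rr T c = h := by
  rw [peel_iterate, selected_subset_eq T _ (Finset.filter_subset _ _)]
  ext c
  simp only [Finset.mem_filter]
  constructor
  · rintro ⟨⟨hcs, hm⟩, hall⟩
    refine ⟨hcs, ?_⟩
    by_contra hne
    obtain ⟨c', hc's, he, hcol, hrrc'⟩ :=
      exists_right_high T hcs (show h < rr T c by omega)
    exact hall c' ⟨hc's, hrrc'⟩ he hcol
  · rintro ⟨hcs, hrc⟩
    refine ⟨⟨hcs, hrc.ge⟩, ?_⟩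
    rintro c' ⟨hc's, hm⟩ he hlt
    have := rr_lt_of_col_lt T hcs hc's he hlt
    omega

lemma peelCount_eq (T : LRTableau) (i h : ℕ) :
    peelCount T i h = ((T.supp.filter fun c => rr T c = h).filter fun c => c.2 = i).card := by
  unfold peelCount
  rw [selected_step]

/-- The key static comparison: the `j`-th-from-the-right cell with entry `v` lies
weakly to the left of the `j`-th-from-the-right cell with entry `v - 1`. -/
lemma chain (T : LRTableau) : ∀ j v, 2 ≤ v → ∀ c c', c ∈ T.supp → c' ∈ T.supp →
    T.entry c = v → T.entry c' = v - 1 → rr T c = j → rr T c' = j → c.2 ≤ c'.2 := by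
  intro j
  induction j using Nat.strong_induction_on with
  | _ j IH =>
  intro v hv c c' hc hc' hec hec' hrc hrc'
  by_contra hcol
  push_neg at hcol
  -- Step A: the `(v-1)`-cell lies strictly above the `v`-cell
  have hb_lt_a : c'.1 < c.1 := by
    by_contra hba
    push_neg at hba
    have hlat := T.lattice v (c.1 + 1) hv
    have h1 : j + 1 ≤ (T.supp.filter fun x => x.1 < c.1 + 1 ∧ T.entry x = v).card := by
      have hsub : insert c (Rset T c) ⊆
          T.supp.filter fun x => x.1 < c.1 + 1 ∧ T.entry x = v := by
        intro x hx
        rcases Finset.mem_insert.mp hx with rfl | hx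
        · exact Finset.mem_filter.mpr ⟨hc, by omega, hec⟩
        · have hxp := (mem_Rset T c x).mp hx
          have := hstrip T hc hxp.1 hxp.2.1 hxp.2.2
          exact Finset.mem_filter.mpr ⟨hxp.1, by omega, hxp.2.1.trans hec⟩
      calc j + 1 = (insert c (Rset T c)).card := by
            rw [Finset.card_insert_of_notMem
              (fun hmem => absurd ((mem_Rset T c c).mp hmem).2.2 (lt_irrefl _))]
            unfold rr at hrc; omega
        _ ≤ _ := Finset.card_le_card hsub
    have h3 : (T.supp.filter fun x => x.1 + 1 < c.1 + 1 ∧ T.entry x = v - 1) ⊆ Rset T c' := by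
      intro x hx
      rw [Finset.mem_filter] at hx
      obtain ⟨hxs, hxr, hxe⟩ := hx
      have hxne : x ≠ c' := by
        intro hxeq; rw [hxeq] at hxr; omega
      have hxcol : c'.2 < x.2 := by
        rcases lt_trichotomy x.2 c'.2 with hlt | heq | hgt
        · have := hstrip T hxs hc' (hec'.trans hxe.symm) hlt
          omega
        · exact absurd heq (col_ne T hc' hxs (hxe.trans hec'.symm) hxne)
        · exact hgt
      exact (mem_Rset T c' x).mpr ⟨hxs, hxe.trans hec'.symm, hxcol⟩
    have h4 := Finset.card_le_card h3
    unfold rr at hrc'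
    omega
  -- Step B: the cell `(c'.1, c.2)` is in the diagram
  obtain ⟨dd, ff, hdd, hff, _, hch⟩ := T.skew
  have hmid : (c'.1, c.2) ∈ T.supp := by
    rw [hch]
    exact ⟨le_trans (hdd hcol.le) ((hch c').mp hc').1, lt_trans hb_lt_a ((hch c).mp hc).2⟩
  -- Step C: its entry is `v - 1`
  have hc1 : (c.1, c.2) ∈ T.supp := by rw [Prod.mk.eta]; exact hc
  have hc'1 : (c'.1, c'.2) ∈ T.supp := by rw [Prod.mk.eta]; exact hc'
  have hC1 : T.entry (c'.1, c.2) < v := by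
    have := T.col_strict c'.1 c.1 c.2 hb_lt_a hmid hc1
    rwa [Prod.mk.eta, hec] at this
  have hC2 : v - 1 ≤ T.entry (c'.1, c.2) := by
    have := T.row_weak c'.1 c'.2 c.2 hcol.le hc'1 hmid
    rwa [Prod.mk.eta, hec'] at this
  have hCe : T.entry (c'.1, c.2) = v - 1 := by omega
  -- Step D: contradiction via the induction hypothesis
  have hrrlt : rr T (c'.1, c.2) < j := by
    have := rr_lt_of_col_lt T hc' hmid (hCe.trans hec'.symm) hcol
    omega
  have hjcnt : j < (T.supp.filter fun x => T.entry x = v).card := by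
    have := rr_lt_card T hc
    rwa [hec, hrc] at this
  obtain ⟨c₂, hc₂s, hc₂e, hc₂rr⟩ := exists_rr T v (rr T (c'.1, c.2)) (by omega)
  have hle := IH _ hrrlt v hv c₂ (c'.1, c.2) hc₂s hmid hc₂e hCe hc₂rr rfl
  have hcc₂ : c.2 < c₂.2 := by
    by_cases hcc : c₂ = c
    · rw [hcc] at hc₂rr; omega
    · rcases lt_trichotomy c₂.2 c.2 with hlt | heq | hgt
      · have := rr_lt_of_col_lt T hc₂s hc (hec.trans hc₂e.symm) hlt
        omega
      · exact absurd heq (col_ne T hc hc₂s (hc₂e.trans hec.symm) hcc)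
      · exact hgt
  simp only at hle
  omega

/-- Column domination: the selected `v`-cell lies weakly left of the selected `1`-cell. -/
lemma dom (T : LRTableau) {s : ℕ} (e : Fin s → ℕ)
    (hcnt : ∀ v, 1 ≤ v → (T.supp.filter fun c => T.entry c = v).card =
      (Finset.univ.filter fun h : Fin s => v ≤ e h).card) :
    ∀ v, 1 ≤ v → ∀ j c c1, c ∈ T.supp → c1 ∈ T.supp → T.entry c = v → T.entry c1 = 1 →
      rr T c = j → rr T c1 = j → c.2 ≤ c1.2 := by
  intro v
  induction v using Nat.strong_induction_on with
  | _ v IH =>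
  intro hv j c c1 hc hc1 hec hec1 hrc hrc1
  rcases eq_or_lt_of_le hv with h1 | h2
  · have : c1 = c := eq_of_rr_eq T hc hc1 (by rw [hec1, hec, ← h1]) (by rw [hrc, hrc1])
    rw [this]
  · have hjv : j < (T.supp.filter fun x => T.entry x = v).card := by
      have := rr_lt_card T hc; rwa [hec, hrc] at this
    have hmono : (T.supp.filter fun x => T.entry x = v).card ≤
        (T.supp.filter fun x => T.entry x = v - 1).card := by
      rw [hcnt v (by omega), hcnt (v - 1) (by omega)]
      apply Finset.card_le_card
      intro x hx
      rw [Finset.mem_filter] at hx ⊢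
      exact ⟨hx.1, by omega⟩
    obtain ⟨c', hc's, hc'e, hc'rr⟩ := exists_rr T (v - 1) j (by omega)
    have hstep := chain T j v h2 c c' hc hc's hec hc'e hrc hc'rr
    have hrest := IH (v - 1) (by omega) (by omega) j c' c1 hc's hc1 hc'e hec1 hc'rr hrc1
    omega

/-- For an LR tableau `T` of shape `F^t − D^t` and content `E^t`
(with `d_j ≤ f_j` for all `j`): the monomial `e_1(T) = ∏_{h=1}^{s} y_{a_h,1}`
(with `a_h = d_{i(h)} + 1` the topmost row of the `i(h)`-th column of `F^t − D^t`,
0-based `a_h = ext d (iNat T t h)`) equals the product of the factors `y_{a(b),1}` of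
`e(T)` over the boxes `b` of `T` containing the entry `1`; `e_1(T)` divides `e(T)`,
and the quotient involves only variables `y_{ac}` with `c ≥ 2`; and for each `h`, the
box into which the entry `1` of the `h`-th column of the banal tableau `BE^t` is
placed by the inverse of the standard peeling is the topmost box of the `i(h)`-th
column of `F^t − D^t`, namely the cell `(d_{i(h)}, i(h))` removed at the `h`-th
peeling step with entry `1`. -/
theorem eOne_divides_eT
    (n k l : ℕ) (hn : 0 < n) (hk : 0 < k) (hl : 0 < l)
    {r s t : ℕ} (hr : r ≤ k) (hs : s ≤ l) (ht : t ≤ min n (k + l))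
    (d : Fin r → ℕ) (e : Fin s → ℕ) (f : Fin t → ℕ)
    (hd : Antitone d) (he : Antitone e) (hf : Antitone f)
    (hdpos : ∀ i, 0 < d i) (hepos : ∀ i, 0 < e i) (hfpos : ∀ j, 0 < f j)
    (hsum : (∑ i, d i) + (∑ i, e i) = ∑ j, f j)
    (hdf : ∀ j : ℕ, ext d j ≤ ext f j)
    (T : LRTableau) (hT : IsLRofShape T d e f) :
    (∏ h : Fin s, yvar n k l (ext d (iNat T t h)) 0) =
        (∏ c ∈ T.supp.filter fun c => T.entry c = 1, yvar n k l c.1 0) ∧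
    (∏ h : Fin s, yvar n k l (ext d (iNat T t h)) 0) ∣ eT n k l T ∧
    eT n k l T = (∏ h : Fin s, yvar n k l (ext d (iNat T t h)) 0) *
        ∏ c ∈ T.supp.filter fun c => 2 ≤ T.entry c, yvar n k l c.1 (T.entry c - 1) ∧
    ∀ h : Fin s, (ext d (iNat T t h), iNat T t h) ∈
        selected T.entry ((peel T.entry)^[(h : ℕ)] T.supp) ∧
      T.entry (ext d (iNat T t h), iNat T t h) = 1 := by
  classical
  obtain ⟨hsupp, hcnt⟩ := hT
  have hs_cnt1 : (T.supp.filter fun c => T.entry c = 1).card = s := by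
    have huniv : (Finset.univ.filter fun h : Fin s => 1 ≤ e h) = Finset.univ :=
      Finset.filter_true_of_mem fun h _ => hepos h
    rw [hcnt 1 le_rfl, huniv]
    simp
  have hshape : ∀ c : ℕ × ℕ, c ∈ T.supp ↔
      (c.1 < ∑ j, f j ∧ c.2 < t) ∧ ext d c.2 ≤ c.1 ∧ c.1 < ext f c.2 := by
    intro c
    rw [hsupp]
    unfold shape
    rw [Finset.mem_filter, Finset.mem_product, Finset.mem_range, Finset.mem_range]
  have key : ∀ h : Fin s, ∃ c1 ∈ T.supp, T.entry c1 = 1 ∧ rr T c1 = (h : ℕ) ∧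
      (ext d (iNat T t (h : ℕ)), iNat T t (h : ℕ)) = c1 := by
    intro h
    obtain ⟨c1, hc1s, hc1e, hc1rr⟩ := exists_rr T 1 (h : ℕ) (by rw [hs_cnt1]; exact h.isLt)
    have hsh := (hshape c1).mp hc1s
    have htop : c1.1 = ext d c1.2 := by
      by_contra hne
      have hlt : ext d c1.2 < c1.1 := lt_of_le_of_ne hsh.2.1 (Ne.symm hne)
      have htops : (ext d c1.2, c1.2) ∈ T.supp := by
        rw [hshape]
        exact ⟨⟨lt_of_le_of_lt hsh.2.1 hsh.1.1, hsh.1.2⟩, le_rfl,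
          lt_of_le_of_lt hsh.2.1 hsh.2.2⟩
      have hc11 : (c1.1, c1.2) ∈ T.supp := by rw [Prod.mk.eta]; exact hc1s
      have hstr := T.col_strict (ext d c1.2) c1.1 c1.2 hlt htops hc11
      rw [Prod.mk.eta, hc1e] at hstr
      exact ((T.mem_supp _).mp htops) (by omega)
    have hpcpos : 0 < peelCount T c1.2 (h : ℕ) := by
      rw [peelCount_eq]
      exact Finset.card_pos.mpr
        ⟨c1, Finset.mem_filter.mpr ⟨Finset.mem_filter.mpr ⟨hc1s, hc1rr⟩, rfl⟩⟩
    have hmemf : c1.2 ∈ (Finset.range t).filter fun i => 0 < peelCount T i (h : ℕ) :=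
      Finset.mem_filter.mpr ⟨Finset.mem_range.mpr hsh.1.2, hpcpos⟩
    have hiNat : iNat T t (h : ℕ) = c1.2 := by
      unfold iNat
      apply le_antisymm
      · apply Finset.sup_le
        intro i hi
        obtain ⟨hir, hipos⟩ := Finset.mem_filter.mp hi
        rw [peelCount_eq] at hipos
        obtain ⟨c, hcmem⟩ := Finset.card_pos.mp hipos
        obtain ⟨hc', hci⟩ := Finset.mem_filter.mp hcmem
        obtain ⟨hcs, hcrr⟩ := Finset.mem_filter.mp hc'
        have hce : 1 ≤ T.entry c := by
          have := (T.mem_supp c).mp hcs; omega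
        have hdom := dom T e hcnt (T.entry c) hce (h : ℕ) c c1 hcs hc1s rfl hc1e hcrr hc1rr
        exact hci ▸ hdom
      · exact Finset.le_sup (f := id) hmemf
    exact ⟨c1, hc1s, hc1e, hc1rr, by rw [hiNat, ← htop]⟩
  have claim4 : ∀ h : Fin s, (ext d (iNat T t h), iNat T t h) ∈
      selected T.entry ((peel T.entry)^[(h : ℕ)] T.supp) ∧
      T.entry (ext d (iNat T t h), iNat T t h) = 1 := by
    intro h
    obtain ⟨c1, hc1s, hc1e, hc1rr, hg⟩ := key h
    rw [selected_step, hg]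
    exact ⟨Finset.mem_filter.mpr ⟨hc1s, hc1rr⟩, hc1e⟩
  have claim1 : (∏ h : Fin s, yvar n k l (ext d (iNat T t h)) 0) =
      ∏ c ∈ T.supp.filter fun c => T.entry c = 1, yvar n k l c.1 0 := by
    apply Finset.prod_bij (fun (h : Fin s) _ => (ext d (iNat T t (h : ℕ)), iNat T t (h : ℕ)))
    · intro a _
      obtain ⟨c1, hc1s, hc1e, hc1rr, hg⟩ := key a
      rw [hg]
      exact Finset.mem_filter.mpr ⟨hc1s, hc1e⟩
    · intro a₁ _ a₂ _ heq
      obtain ⟨c1, hc1s, hc1e, hc1rr, hg1⟩ := key a₁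
      obtain ⟨c2, hc2s, hc2e, hc2rr, hg2⟩ := key a₂
      rw [hg1, hg2] at heq
      apply Fin.ext
      rw [← hc1rr, ← hc2rr, heq]
    · intro b hb
      obtain ⟨hbs, hbe⟩ := Finset.mem_filter.mp hb
      have hblt : rr T b < s := by
        have := rr_lt_card T hbs
        rwa [hbe, hs_cnt1] at this
      refine ⟨⟨rr T b, hblt⟩, Finset.mem_univ _, ?_⟩
      obtain ⟨c1, hc1s, hc1e, hc1rr, hg⟩ := key ⟨rr T b, hblt⟩
      rw [hg]
      exact eq_of_rr_eq T hbs hc1s (hc1e.trans hbe.symm) hc1rr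
    · intro a _
      rfl
  have hsplit := Finset.prod_filter_mul_prod_filter_not T.supp (fun c => T.entry c = 1)
    (fun c => yvar n k l c.1 (T.entry c - 1))
  have hfirst : (∏ c ∈ T.supp.filter fun c => T.entry c = 1, yvar n k l c.1 (T.entry c - 1))
      = ∏ c ∈ T.supp.filter fun c => T.entry c = 1, yvar n k l c.1 0 := by
    apply Finset.prod_congr rfl
    intro c hc
    rw [(Finset.mem_filter.mp hc).2]
  have hneg : (T.supp.filter fun c => ¬T.entry c = 1) =
      T.supp.filter fun c => 2 ≤ T.entry c := by
    apply Finset.filter_congr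
    intro c hc
    have h0 := (T.mem_supp c).mp hc
    constructor <;> intro h' <;> omega
  have claim3 : eT n k l T = (∏ h : Fin s, yvar n k l (ext d (iNat T t h)) 0) *
      ∏ c ∈ T.supp.filter fun c => 2 ≤ T.entry c, yvar n k l c.1 (T.entry c - 1) := by
    rw [claim1]
    unfold eT
    rw [← hsplit, hfirst, hneg]
  exact ⟨claim1, ⟨_, claim3⟩, claim3, claim4⟩

end HTW
end

section
/- Let T be a Littlewood–Richardson tableau, and let T_{/1} be the filling obtained from T by deleting every cell containing the entry 1 and decreasing every remaining entry by 1. Then T_{/1} is a Littlewood–Richardson tableau: its cells form a skew Young diagram, it is semistandard (LR1), and it satisfies the lattice condition (LR2). -/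
open MvPolynomial Matrix Finset

namespace HTW

/-- Deleting from an LR tableau `T` every cell containing the entry
`1` and decreasing every remaining entry by `1` yields again an LR tableau: the
remaining cells form a skew Young diagram, the filling is semistandard (LR1), and it
satisfies the lattice condition (LR2). -/
theorem removeOnes_isLRTableau (T : LRTableau) :
    ∃ T' : LRTableau, T'.entry = fun c => T.entry c - 1 := by
  classical
  obtain ⟨dd, ff, hdd, hff, hle, hmem⟩ := T.skew
  have hmem' : ∀ a b : ℕ, (a, b) ∈ T.supp ↔ dd b ≤ a ∧ a < ff b := by
    intro a b; simpa using hmem (a, b)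
  refine ⟨{
    entry := fun c => T.entry c - 1
    supp := T.supp.filter fun c => 2 ≤ T.entry c
    mem_supp := by
      intro c
      simp only [Finset.mem_filter, T.mem_supp]
      omega
    skew := ?_
    row_weak := by
      intro a i i' hii' h1 h2
      simp only [Finset.mem_filter] at h1 h2
      have := T.row_weak a i i' hii' h1.1 h2.1
      omega
    col_strict := by
      intro a a' i haa' h1 h2
      simp only [Finset.mem_filter] at h1 h2
      have := T.col_strict a a' i haa' h1.1 h2.1
      have h2' := h1.2
      omega
    lattice := by
      intro m p hm
      have h1 : ((T.supp.filter fun c => 2 ≤ T.entry c).filter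
          fun c => c.1 < p ∧ T.entry c - 1 = m) =
          T.supp.filter fun c => c.1 < p ∧ T.entry c = m + 1 := by
        ext c
        simp only [Finset.mem_filter, and_assoc]
        exact ⟨fun h => ⟨h.1, h.2.2.1, by omega⟩, fun h => ⟨h.1, by omega, h.2.1, by omega⟩⟩
      have h2 : ((T.supp.filter fun c => 2 ≤ T.entry c).filter
          fun c => c.1 + 1 < p ∧ T.entry c - 1 = m - 1) =
          T.supp.filter fun c => c.1 + 1 < p ∧ T.entry c = m := by
        ext c
        simp only [Finset.mem_filter, and_assoc]
        exact ⟨fun h => ⟨h.1, h.2.2.1, by omega⟩, fun h => ⟨h.1, by omega, h.2.1, by omega⟩⟩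
      rw [h1, h2]
      have := T.lattice (m + 1) p (by omega)
      simpa using this }, rfl⟩
  -- the skew diagram condition
  set del : ℕ → ℕ := fun i =>
    if (dd i, i) ∈ T.supp ∧ T.entry (dd i, i) = 1 then dd i + 1 else dd i with hdel
  have hdel_ge : ∀ i, dd i ≤ del i := by
    intro i; simp only [hdel]; split <;> omega
  refine ⟨del, ff, ?_, hff, ?_, ?_⟩
  · -- Antitone del
    intro i j hij
    have hdd' : dd j ≤ dd i := hdd hij
    by_cases hj : (dd j, j) ∈ T.supp ∧ T.entry (dd j, j) = 1
    · rcases lt_or_eq_of_le hdd' with h | h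
      · have : del j = dd j + 1 := by simp [hdel, hj]
        have := hdel_ge i
        omega
      · -- dd j = dd i : show column i's top cell also has entry 1
        have hjm := (hmem' (dd j) j).mp hj.1
        have him : (dd i, i) ∈ T.supp := by
          rw [hmem']
          refine ⟨le_refl _, ?_⟩
          have := hff hij
          omega
        have hrow : T.entry (dd i, i) ≤ T.entry (dd i, j) := by
          apply T.row_weak (dd i) i j hij him
          rw [← h]; exact hj.1
        have hj2 : T.entry (dd i, j) = 1 := by rw [← h]; exact hj.2
        have hne : T.entry (dd i, i) ≠ 0 := (T.mem_supp _).mp him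
        have h1 : T.entry (dd i, i) = 1 := by omega
        have e1 : del i = dd i + 1 := by simp [hdel, him, h1]
        have e2 : del j = dd j + 1 := by simp [hdel, hj]
        omega
    · have : del j = dd j := by simp [hdel, hj]
      have := hdel_ge i
      omega
  · -- del ≤ ff
    intro i
    simp only [hdel]
    split
    · next h =>
      have := (hmem' (dd i) i).mp h.1
      omega
    · exact hle i
  · -- membership characterization
    rintro ⟨a, i⟩
    simp only [Finset.mem_filter, hmem']
    constructor
    · rintro ⟨⟨h1, h2⟩, h3⟩
      refine ⟨?_, h2⟩
      simp only [hdel]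
      split
      · next h =>
        rcases lt_or_eq_of_le h1 with h' | h'
        · omega
        · exfalso
          have : T.entry (a, i) = 1 := by rw [← h']; exact h.2
          omega
      · exact h1
    · rintro ⟨h1, h2⟩
      have hdla := hdel_ge i
      have hain : dd i ≤ a := le_trans hdla h1
      have hmemai : (a, i) ∈ T.supp := (hmem' a i).mpr ⟨hain, h2⟩
      have hne : T.entry (a, i) ≠ 0 := (T.mem_supp _).mp hmemai
      refine ⟨⟨hain, h2⟩, ?_⟩
      by_contra hlt
      have he1 : T.entry (a, i) = 1 := by omega
      have htop : (dd i, i) ∈ T.supp := (hmem' (dd i) i).mpr ⟨le_refl _, by omega⟩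
      rcases lt_or_eq_of_le hain with h' | h'
      · have := T.col_strict (dd i) a i h' htop hmemai
        have := (T.mem_supp (dd i, i)).mp htop
        omega
      · have hcond : (dd i, i) ∈ T.supp ∧ T.entry (dd i, i) = 1 := by
          rw [h']; exact ⟨hmemai, he1⟩
        have : del i = dd i + 1 := by simp [hdel, hcond]
        omega

end HTW
end

section
/- Fix partitions D, E, F with r ≤ k, s ≤ ℓ, t ≤ min(n, k+ℓ) and |D| + |E| = |F|. For every matrix M = (m_{ih}) of non-negative integers, the coefficient polynomial Δ_{(D,E,F),M} in the β-expansion of Δ_{(D,E,F),(J,B)} lies in the tensor product algebra TA_{n,k,ℓ} = P(M_{n,k+ℓ})^{U_k × U_ℓ × U_n}, and it is an eigenvector for the product of diagonal tori A_n × A_k × A_ℓ with eigencharacter ψ^{F^t} × ψ^{D^t} × ψ^{E^t}. -/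
open MvPolynomial Matrix Finset

namespace HTW

/-! ## Auxiliary lemmas -/

section AuxGeneral

lemma det_sigma_unitriangular {ι : Type*} [Fintype ι] [DecidableEq ι] [LinearOrder ι]
    {g : ι → ℕ} {R : Type*} [CommRing R]
    (L : Matrix ((i : ι) × Fin (g i)) ((i : ι) × Fin (g i)) R)
    (hzero : ∀ p q : (i : ι) × Fin (g i),
      (p.1 < q.1 ∨ (p.1 = q.1 ∧ (p.2 : ℕ) < (q.2 : ℕ))) → L p q = 0)
    (hdiag : ∀ p, L p p = 1) : L.det = 1 := by
  letI : LinearOrder ((i : ι) × Fin (g i)) :=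
    (Sigma.Lex.linearOrder : LinearOrder (Σₗ i, Fin (g i)))
  rw [Matrix.det_of_lowerTriangular]
  · exact Finset.prod_eq_one fun p _ => hdiag _
  · intro p q h
    have hpq : Sigma.Lex (· < ·) (fun _ => (· < ·)) p q := h
    cases hpq with
    | left a b h1 => exact hzero _ _ (Or.inl h1)
    | right a b h2 => exact hzero _ _ (Or.inr ⟨rfl, h2⟩)

lemma sum_trunc {M : Type*} [AddCommMonoid M] {m N : ℕ} (h : m ≤ N) (G : ℕ → M)
    (hG : ∀ c, m ≤ c → G c = 0) : ∑ c : Fin N, G (c : ℕ) = ∑ c : Fin m, G (c : ℕ) := by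
  rw [Fin.sum_univ_eq_sum_range, Fin.sum_univ_eq_sum_range]
  exact (Finset.sum_subset (Finset.range_subset_range.2 h)
    (fun x _ hx => hG x (by simpa using hx))).symm

lemma prod_trunc {M : Type*} [CommMonoid M] {m N : ℕ} (h : m ≤ N) (G : ℕ → M)
    (hG : ∀ c, m ≤ c → G c = 1) : ∏ c : Fin N, G (c : ℕ) = ∏ c : Fin m, G (c : ℕ) := by
  rw [Fin.prod_univ_eq_prod_range, Fin.prod_univ_eq_prod_range]
  exact (Finset.prod_subset (Finset.range_subset_range.2 h)
    (fun x _ hx => hG x (by simpa using hx))).symm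

lemma finSumFinEquiv_symm_mk_left {k l : ℕ} (x : ℕ) (hx : x < k) (hx2 : x < k + l) :
    finSumFinEquiv.symm (⟨x, hx2⟩ : Fin (k + l)) = Sum.inl ⟨x, hx⟩ := by
  rw [Equiv.symm_apply_eq, finSumFinEquiv_apply_left]
  exact (Fin.ext rfl)

lemma finSumFinEquiv_symm_mk_right {k l : ℕ} (x : ℕ) (hx : k ≤ x) (hx2 : x < k + l) :
    finSumFinEquiv.symm (⟨x, hx2⟩ : Fin (k + l)) = Sum.inr ⟨x - k, by omega⟩ := by
  rw [Equiv.symm_apply_eq, finSumFinEquiv_apply_right]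
  apply Fin.ext
  simp [Fin.natAdd]
  omega

end AuxGeneral
section AuxSub

variable {n k l : ℕ}

/-- Entry of a square matrix read off with natural-number indices (junk `0` out of range). -/
def uval {m : ℕ} (g : Matrix (Fin m) (Fin m) ℂ) (c a : ℕ) : ℂ :=
  if h : c < m ∧ a < m then g ⟨c, h.1⟩ ⟨a, h.2⟩ else 0

/-- Entry of a diagonal vector read off with a natural-number index (junk `1` out of range). -/
def dval {m : ℕ} (v : Fin m → ℂ) (a : ℕ) : ℂ := if h : a < m then v ⟨a, h⟩ else 1

lemma leftSub_xvar (g : Matrix (Fin n) (Fin n) ℂ) (a b : ℕ) :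
    leftSub n (k + l) g (xvar n k l a b) =
      ∑ c : Fin n, MvPolynomial.C (uval g (c : ℕ) a) * xvar n k l (c : ℕ) b := by
  by_cases hab : a < n ∧ b < k
  · rw [xvar, dif_pos hab, leftSub, aeval_X]
    refine Finset.sum_congr rfl fun c _ => ?_
    rw [xvar, dif_pos ⟨c.isLt, hab.2⟩, uval, dif_pos ⟨c.isLt, hab.1⟩]
  · rw [xvar, dif_neg hab, map_zero]
    symm
    refine Finset.sum_eq_zero fun c _ => ?_
    by_cases ha : a < n
    · have hb : ¬ b < k := fun hb => hab ⟨ha, hb⟩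
      rw [xvar, dif_neg (fun hc => hb hc.2), mul_zero]
    · rw [uval, dif_neg (fun hc => ha hc.2), map_zero, zero_mul]

lemma leftSub_yvar (g : Matrix (Fin n) (Fin n) ℂ) (a b : ℕ) :
    leftSub n (k + l) g (yvar n k l a b) =
      ∑ c : Fin n, MvPolynomial.C (uval g (c : ℕ) a) * yvar n k l (c : ℕ) b := by
  by_cases hab : a < n ∧ b < l
  · rw [yvar, dif_pos hab, leftSub, aeval_X]
    refine Finset.sum_congr rfl fun c _ => ?_
    rw [yvar, dif_pos ⟨c.isLt, hab.2⟩, uval, dif_pos ⟨c.isLt, hab.1⟩]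
  · rw [yvar, dif_neg hab, map_zero]
    symm
    refine Finset.sum_eq_zero fun c _ => ?_
    by_cases ha : a < n
    · have hb : ¬ b < l := fun hb => hab ⟨ha, hb⟩
      rw [yvar, dif_neg (fun hc => hb hc.2), mul_zero]
    · rw [uval, dif_neg (fun hc => ha hc.2), map_zero, zero_mul]

lemma leftSub_diag_xvar (an : Fin n → ℂ) (a b : ℕ) :
    leftSub n (k + l) (Matrix.diagonal an) (xvar n k l a b) =
      MvPolynomial.C (dval an a) * xvar n k l a b := by
  rw [leftSub_xvar]
  by_cases ha : a < n
  · rw [Finset.sum_eq_single (⟨a, ha⟩ : Fin n)]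
    · rw [uval, dif_pos ⟨ha, ha⟩, dval, dif_pos ha]
      exact congrArg (fun z => MvPolynomial.C z * xvar n k l a b)
        (Matrix.diagonal_apply_eq an ⟨a, ha⟩)
    · intro c _ hc
      rw [uval, dif_pos ⟨c.isLt, ha⟩,
        Matrix.diagonal_apply_ne an (by simpa using hc), map_zero, zero_mul]
    · exact fun h => absurd (Finset.mem_univ _) h
  · have hx : xvar n k l a b = 0 := by rw [xvar, dif_neg (fun hc => ha hc.1)]
    rw [hx, mul_zero]
    refine Finset.sum_eq_zero fun c _ => ?_
    rw [uval, dif_neg (fun hc => ha hc.2), map_zero, zero_mul]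

lemma leftSub_diag_yvar (an : Fin n → ℂ) (a b : ℕ) :
    leftSub n (k + l) (Matrix.diagonal an) (yvar n k l a b) =
      MvPolynomial.C (dval an a) * yvar n k l a b := by
  rw [leftSub_yvar]
  by_cases ha : a < n
  · rw [Finset.sum_eq_single (⟨a, ha⟩ : Fin n)]
    · rw [uval, dif_pos ⟨ha, ha⟩, dval, dif_pos ha]
      exact congrArg (fun z => MvPolynomial.C z * yvar n k l a b)
        (Matrix.diagonal_apply_eq an ⟨a, ha⟩)
    · intro c _ hc
      rw [uval, dif_pos ⟨c.isLt, ha⟩,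
        Matrix.diagonal_apply_ne an (by simpa using hc), map_zero, zero_mul]
    · exact fun h => absurd (Finset.mem_univ _) h
  · have hx : yvar n k l a b = 0 := by rw [yvar, dif_neg (fun hc => ha hc.1)]
    rw [hx, mul_zero]
    refine Finset.sum_eq_zero fun c _ => ?_
    rw [uval, dif_neg (fun hc => ha hc.2), map_zero, zero_mul]

end AuxSub
section AuxRight

variable {n k l : ℕ}

lemma blockDiag_apply_left (u1 : Matrix (Fin k) (Fin k) ℂ) (u2 : Matrix (Fin l) (Fin l) ℂ)
    (c : Fin k) (x : ℕ) (hx2 : x < k + l) :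
    blockDiag k l u1 u2 (Fin.castAdd l c) ⟨x, hx2⟩ =
      if hx : x < k then u1 c ⟨x, hx⟩ else 0 := by
  rw [blockDiag, Matrix.submatrix_apply, finSumFinEquiv_symm_apply_castAdd]
  by_cases hx : x < k
  · rw [finSumFinEquiv_symm_mk_left x hx hx2, dif_pos hx]
    rfl
  · rw [finSumFinEquiv_symm_mk_right x (by omega) hx2, dif_neg hx]
    rfl

lemma blockDiag_apply_right (u1 : Matrix (Fin k) (Fin k) ℂ) (u2 : Matrix (Fin l) (Fin l) ℂ)
    (c : Fin l) (x : ℕ) (hx2 : x < k + l) :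
    blockDiag k l u1 u2 (Fin.natAdd k c) ⟨x, hx2⟩ =
      if hx : k ≤ x then u2 c ⟨x - k, by omega⟩ else 0 := by
  rw [blockDiag, Matrix.submatrix_apply, finSumFinEquiv_symm_apply_natAdd]
  by_cases hx : k ≤ x
  · rw [finSumFinEquiv_symm_mk_right x hx hx2, dif_pos hx]
    rfl
  · rw [finSumFinEquiv_symm_mk_left x (by omega) hx2, dif_neg hx]
    rfl

lemma blockDiag_apply_right' (u1 : Matrix (Fin k) (Fin k) ℂ) (u2 : Matrix (Fin l) (Fin l) ℂ)
    (c : Fin l) (b : ℕ) (hb : b < l) (hx2 : k + b < k + l) :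
    blockDiag k l u1 u2 (Fin.natAdd k c) ⟨k + b, hx2⟩ = u2 c ⟨b, hb⟩ := by
  rw [blockDiag_apply_right, dif_pos (by omega : k ≤ k + b)]
  exact congrArg (u2 c) (Fin.ext (by simp))

lemma rightSub_blockDiag_xvar (u1 : Matrix (Fin k) (Fin k) ℂ) (u2 : Matrix (Fin l) (Fin l) ℂ)
    (a b : ℕ) :
    rightSub n (k + l) (blockDiag k l u1 u2) (xvar n k l a b) =
      ∑ c : Fin k, MvPolynomial.C (uval u1 (c : ℕ) b) * xvar n k l a (c : ℕ) := by
  by_cases hab : a < n ∧ b < k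
  · obtain ⟨ha, hb⟩ := hab
    rw [xvar, dif_pos ⟨ha, hb⟩, rightSub, aeval_X]
    rw [← Equiv.sum_comp finSumFinEquiv
      (fun c => MvPolynomial.C (blockDiag k l u1 u2 c ⟨b, by omega⟩) *
        (X ((⟨a, ha⟩ : Fin n), c) : PolyRing n (k + l))), Fintype.sum_sum_type]
    have h2 : ∀ c : Fin l,
        MvPolynomial.C (blockDiag k l u1 u2 (finSumFinEquiv (Sum.inr c)) ⟨b, by omega⟩) *
          (X ((⟨a, ha⟩ : Fin n), finSumFinEquiv (Sum.inr c)) : PolyRing n (k + l)) = 0 := by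
      intro c
      rw [finSumFinEquiv_apply_right, blockDiag_apply_right, dif_neg (by omega), map_zero,
        zero_mul]
    rw [Finset.sum_congr rfl (fun c _ => h2 c), Finset.sum_const, smul_zero, add_zero]
    refine Finset.sum_congr rfl fun c _ => ?_
    rw [finSumFinEquiv_apply_left, blockDiag_apply_left, dif_pos hb, uval,
      dif_pos ⟨c.isLt, hb⟩, xvar, dif_pos ⟨ha, c.isLt⟩]
    rfl
  · rw [xvar, dif_neg hab, map_zero]
    symm
    refine Finset.sum_eq_zero fun c _ => ?_
    by_cases hb : b < k
    · have ha : ¬ a < n := fun ha => hab ⟨ha, hb⟩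
      rw [xvar, dif_neg (fun hc => ha hc.1), mul_zero]
    · rw [uval, dif_neg (fun hc => hb hc.2), map_zero, zero_mul]

lemma rightSub_blockDiag_yvar (u1 : Matrix (Fin k) (Fin k) ℂ) (u2 : Matrix (Fin l) (Fin l) ℂ)
    (a b : ℕ) :
    rightSub n (k + l) (blockDiag k l u1 u2) (yvar n k l a b) =
      ∑ c : Fin l, MvPolynomial.C (uval u2 (c : ℕ) b) * yvar n k l a (c : ℕ) := by
  by_cases hab : a < n ∧ b < l
  · obtain ⟨ha, hb⟩ := hab
    rw [yvar, dif_pos ⟨ha, hb⟩, rightSub, aeval_X]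
    rw [← Equiv.sum_comp finSumFinEquiv
      (fun c => MvPolynomial.C (blockDiag k l u1 u2 c ⟨k + b, by omega⟩) *
        (X ((⟨a, ha⟩ : Fin n), c) : PolyRing n (k + l))), Fintype.sum_sum_type]
    have h2 : ∀ c : Fin k,
        MvPolynomial.C (blockDiag k l u1 u2 (finSumFinEquiv (Sum.inl c)) ⟨k + b, by omega⟩) *
          (X ((⟨a, ha⟩ : Fin n), finSumFinEquiv (Sum.inl c)) : PolyRing n (k + l)) = 0 := by
      intro c
      rw [finSumFinEquiv_apply_left, blockDiag_apply_left, dif_neg (by omega), map_zero,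
        zero_mul]
    rw [Finset.sum_congr rfl (fun c _ => h2 c), Finset.sum_const, smul_zero, zero_add]
    refine Finset.sum_congr rfl fun c _ => ?_
    rw [finSumFinEquiv_apply_right, blockDiag_apply_right' u1 u2 c b hb, uval,
      dif_pos ⟨c.isLt, hb⟩, yvar, dif_pos ⟨ha, c.isLt⟩]
    rfl
  · rw [yvar, dif_neg hab, map_zero]
    symm
    refine Finset.sum_eq_zero fun c _ => ?_
    by_cases hb : b < l
    · have ha : ¬ a < n := fun ha => hab ⟨ha, hb⟩
      rw [yvar, dif_neg (fun hc => ha hc.1), mul_zero]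
    · rw [uval, dif_neg (fun hc => hb hc.2), map_zero, zero_mul]

end AuxRight
section AuxDiag

variable {n k l : ℕ}

lemma rightSub_diag_xvar (ak : Fin k → ℂ) (al : Fin l → ℂ) (a b : ℕ) :
    rightSub n (k + l) (blockDiag k l (Matrix.diagonal ak) (Matrix.diagonal al))
        (xvar n k l a b) = MvPolynomial.C (dval ak b) * xvar n k l a b := by
  rw [rightSub_blockDiag_xvar]
  by_cases hb : b < k
  · rw [Finset.sum_eq_single (⟨b, hb⟩ : Fin k)]
    · rw [uval, dif_pos ⟨hb, hb⟩, dval, dif_pos hb]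
      exact congrArg (fun z => MvPolynomial.C z * xvar n k l a b)
        (Matrix.diagonal_apply_eq ak ⟨b, hb⟩)
    · intro c _ hc
      rw [uval, dif_pos ⟨c.isLt, hb⟩,
        Matrix.diagonal_apply_ne ak (by simpa using hc), map_zero, zero_mul]
    · exact fun h => absurd (Finset.mem_univ _) h
  · have hx : xvar n k l a b = 0 := by rw [xvar, dif_neg (fun hc => hb hc.2)]
    rw [hx, mul_zero]
    refine Finset.sum_eq_zero fun c _ => ?_
    rw [uval, dif_neg (fun hc => hb hc.2), map_zero, zero_mul]

lemma rightSub_diag_yvar (ak : Fin k → ℂ) (al : Fin l → ℂ) (a b : ℕ) :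
    rightSub n (k + l) (blockDiag k l (Matrix.diagonal ak) (Matrix.diagonal al))
        (yvar n k l a b) = MvPolynomial.C (dval al b) * yvar n k l a b := by
  rw [rightSub_blockDiag_yvar]
  by_cases hb : b < l
  · rw [Finset.sum_eq_single (⟨b, hb⟩ : Fin l)]
    · rw [uval, dif_pos ⟨hb, hb⟩, dval, dif_pos hb]
      exact congrArg (fun z => MvPolynomial.C z * yvar n k l a b)
        (Matrix.diagonal_apply_eq al ⟨b, hb⟩)
    · intro c _ hc
      rw [uval, dif_pos ⟨c.isLt, hb⟩,
        Matrix.diagonal_apply_ne al (by simpa using hc), map_zero, zero_mul]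
    · exact fun h => absurd (Finset.mem_univ _) h
  · have hx : yvar n k l a b = 0 := by rw [yvar, dif_neg (fun hc => hb hc.2)]
    rw [hx, mul_zero]
    refine Finset.sum_eq_zero fun c _ => ?_
    rw [uval, dif_neg (fun hc => hb hc.2), map_zero, zero_mul]

lemma prod_dval {m tt : ℕ} (g : Fin tt → ℕ) (hg : ∀ j, g j ≤ m) (v : Fin m → ℂ) :
    ∏ p : (j : Fin tt) × Fin (g j), dval v (p.2 : ℕ) =
      ∏ i : Fin m, v i ^ tpart g (i : ℕ) := by
  rw [← Finset.univ_sigma_univ, Finset.prod_sigma]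
  have step : ∀ j : Fin tt, (∏ a : Fin (g j), dval v (a : ℕ)) =
      ∏ i : Fin m, (if (i : ℕ) < g j then v i else 1) := by
    intro j
    have h1 : (∏ a : Fin (g j), dval v (a : ℕ)) =
        ∏ a : Fin (g j), (fun x : ℕ => if x < g j then dval v x else 1) (a : ℕ) := by
      refine Finset.prod_congr rfl fun a _ => ?_
      simp only [if_pos a.isLt]
    have h2 := prod_trunc (hg j) (fun x : ℕ => if x < g j then dval v x else 1)
      (fun c hc => by simp only [if_neg (by omega : ¬ c < g j)])
    rw [h1, ← h2]
    refine Finset.prod_congr rfl fun i _ => ?_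
    by_cases hi : (i : ℕ) < g j
    · simp only [if_pos hi, dval, dif_pos i.isLt]
    · simp only [if_neg hi]
  calc (∏ j : Fin tt, ∏ a : Fin (g j), dval v (a : ℕ))
      = ∏ j : Fin tt, ∏ i : Fin m, (if (i : ℕ) < g j then v i else 1) :=
        Finset.prod_congr rfl fun j _ => step j
    _ = ∏ i : Fin m, ∏ j : Fin tt, (if (i : ℕ) < g j then v i else 1) := Finset.prod_comm
    _ = ∏ i : Fin m, v i ^ tpart g (i : ℕ) := by
        refine Finset.prod_congr rfl fun i _ => ?_
        rw [← Finset.prod_filter, Finset.prod_const]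
        rfl

end AuxDiag
section AuxDJB

variable {n k l : ℕ} {r s t : ℕ} {d : Fin r → ℕ} {e : Fin s → ℕ} {f : Fin t → ℕ}

/-- The block matrix whose determinant is `DeltaJB`. -/
noncomputable def DJB (n k l : ℕ) {r s t : ℕ} (d : Fin r → ℕ) (e : Fin s → ℕ) (f : Fin t → ℕ)
    (hsum : (∑ i, d i) + (∑ i, e i) = ∑ j, f j) :
    Matrix (RowIdx f) (RowIdx f) (BRing n k l t s) :=
  Matrix.of fun i j => match (colEquiv d e f hsum).symm j with
    | Sum.inl c => if (i.1 : ℕ) = (c.1 : ℕ)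
        then (MvPolynomial.C (xvar n k l i.2 c.2) : BRing n k l t s) else 0
    | Sum.inr c => (X (i.1, c.1) : BRing n k l t s) * MvPolynomial.C (yvar n k l i.2 c.2)

lemma DeltaJB_eq_det (hsum : (∑ i, d i) + (∑ i, e i) = ∑ j, f j) :
    DeltaJB n k l d e f hsum = (DJB n k l d e f hsum).det := rfl

lemma DJB_apply_inl (hsum : (∑ i, d i) + (∑ i, e i) = ∑ j, f j) (p q : RowIdx f)
    (cc : (i : Fin r) × Fin (d i)) (hq : (colEquiv d e f hsum).symm q = Sum.inl cc) :
    DJB n k l d e f hsum p q = if (p.1 : ℕ) = (cc.1 : ℕ)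
      then (MvPolynomial.C (xvar n k l p.2 cc.2) : BRing n k l t s) else 0 := by
  unfold DJB
  simp only [Matrix.of_apply, hq]

lemma DJB_apply_inr (hsum : (∑ i, d i) + (∑ i, e i) = ∑ j, f j) (p q : RowIdx f)
    (cc : (i : Fin s) × Fin (e i)) (hq : (colEquiv d e f hsum).symm q = Sum.inr cc) :
    DJB n k l d e f hsum p q =
      (X (p.1, cc.1) : BRing n k l t s) * MvPolynomial.C (yvar n k l p.2 cc.2) := by
  unfold DJB
  simp only [Matrix.of_apply, hq]

lemma DeltaJB_eq_zero (hsum : (∑ i, d i) + (∑ i, e i) = ∑ j, f j)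
    (hdeg : ¬ ((∀ j, f j ≤ n) ∧ (∀ i, d i ≤ k) ∧ (∀ h, e h ≤ l))) :
    DeltaJB n k l d e f hsum = 0 := by
  rw [DeltaJB_eq_det]
  push_neg at hdeg
  by_cases h1 : ∀ j, f j ≤ n
  · by_cases h2 : ∀ i, d i ≤ k
    · have h3 : ¬ ∀ h, e h ≤ l := fun h3 => by
        obtain ⟨h', hh'⟩ := hdeg h1 h2
        exact absurd (h3 h') (by omega)
      push_neg at h3
      obtain ⟨h0, hh0⟩ := h3
      refine Matrix.det_eq_zero_of_column_eq_zero
        ((colEquiv d e f hsum) (Sum.inr ⟨h0, ⟨l, hh0⟩⟩)) fun p => ?_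
      rw [DJB_apply_inr hsum p _ ⟨h0, ⟨l, hh0⟩⟩ (Equiv.symm_apply_apply _ _)]
      have : yvar n k l (p.2 : ℕ) ((⟨l, hh0⟩ : Fin (e h0)) : ℕ) = 0 := by
        rw [yvar, dif_neg (by simp)]
      rw [this, map_zero, mul_zero]
    · push_neg at h2
      obtain ⟨i0, hi0⟩ := h2
      refine Matrix.det_eq_zero_of_column_eq_zero
        ((colEquiv d e f hsum) (Sum.inl ⟨i0, ⟨k, hi0⟩⟩)) fun p => ?_
      rw [DJB_apply_inl hsum p _ ⟨i0, ⟨k, hi0⟩⟩ (Equiv.symm_apply_apply _ _)]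
      have : xvar n k l (p.2 : ℕ) ((⟨k, hi0⟩ : Fin (d i0)) : ℕ) = 0 := by
        rw [xvar, dif_neg (by simp)]
      rw [this, map_zero]
      exact ite_self 0
  · push_neg at h1
    obtain ⟨j0, hj0⟩ := h1
    refine Matrix.det_eq_zero_of_row_eq_zero (⟨j0, ⟨n, hj0⟩⟩ : RowIdx f) fun q => ?_
    rcases hq : (colEquiv d e f hsum).symm q with cc | cc
    · rw [DJB_apply_inl hsum _ q cc hq]
      have : xvar n k l (((⟨n, hj0⟩ : Fin (f j0))) : ℕ) ((cc.2 : ℕ)) = 0 := by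
        rw [xvar, dif_neg (by simp)]
      rw [this, map_zero]
      exact ite_self 0
    · rw [DJB_apply_inr hsum _ q cc hq]
      have : yvar n k l (((⟨n, hj0⟩ : Fin (f j0))) : ℕ) ((cc.2 : ℕ)) = 0 := by
        rw [yvar, dif_neg (by simp)]
      rw [this, map_zero, mul_zero]

end AuxDJB
section AuxLeft

variable {n k l : ℕ} {r s t : ℕ} {d : Fin r → ℕ} {e : Fin s → ℕ} {f : Fin t → ℕ}

set_option maxHeartbeats 2000000 in
lemma DeltaJB_leftSub (hsum : (∑ i, d i) + (∑ i, e i) = ∑ j, f j)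
    (u3 : Matrix (Fin n) (Fin n) ℂ) (h3 : IsUpperUni u3) (hfn : ∀ j, f j ≤ n) :
    MvPolynomial.map (leftSub n (k + l) u3).toRingHom (DeltaJB n k l d e f hsum) =
      DeltaJB n k l d e f hsum := by
  classical
  rw [DeltaJB_eq_det, RingHom.map_det]
  set L : Matrix (RowIdx f) (RowIdx f) (BRing n k l t s) := Matrix.of fun p q =>
    if p.1 = q.1 then (MvPolynomial.C (MvPolynomial.C (uval u3 (q.2 : ℕ) (p.2 : ℕ))) :
      BRing n k l t s) else 0 with hL
  have hLM : (MvPolynomial.map (leftSub n (k + l) u3).toRingHom :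
      BRing n k l t s →+* BRing n k l t s).mapMatrix (DJB n k l d e f hsum) =
      L * DJB n k l d e f hsum := by
    refine Matrix.ext fun p q => ?_
    rw [RingHom.mapMatrix_apply, Matrix.map_apply, Matrix.mul_apply]
    rw [← Finset.univ_sigma_univ, Finset.sum_sigma]
    rw [Finset.sum_eq_single p.1]
    rotate_left
    · intro j' _ hj'
      refine Finset.sum_eq_zero fun a _ => ?_
      have hz : L p ⟨j', a⟩ = 0 := by
        simp only [hL, Matrix.of_apply]
        exact if_neg (fun hh => hj' hh.symm)
      rw [hz, zero_mul]
    · exact fun h => absurd (Finset.mem_univ _) h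
    have hLp : ∀ a : Fin (f p.1), L p ⟨p.1, a⟩ =
        MvPolynomial.C (MvPolynomial.C (uval u3 (a : ℕ) ((p.2 : ℕ)))) := by
      intro a
      simp only [hL, Matrix.of_apply]
      exact if_pos trivial
    rcases hq : (colEquiv d e f hsum).symm q with cc | cc
    · rw [DJB_apply_inl hsum p q cc hq]
      by_cases hcond : (p.1 : ℕ) = (cc.1 : ℕ)
      · rw [if_pos hcond, MvPolynomial.map_C]
        rw [show ((leftSub n (k + l) u3).toRingHom (xvar n k l (p.2 : ℕ) (cc.2 : ℕ))) =
          leftSub n (k + l) u3 (xvar n k l (p.2 : ℕ) (cc.2 : ℕ)) from rfl, leftSub_xvar]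
        rw [map_sum]
        simp only [_root_.map_mul]
        have hvan : ∀ x, f p.1 ≤ x →
            (MvPolynomial.C (MvPolynomial.C (uval u3 x (p.2 : ℕ))) : BRing n k l t s) *
              MvPolynomial.C (xvar n k l x (cc.2 : ℕ)) = 0 := by
          intro x hx
          by_cases hxn : x < n
          · rw [uval, dif_pos ⟨hxn, by omega⟩,
              h3.2 ⟨x, hxn⟩ ⟨(p.2 : ℕ), by omega⟩ (Fin.mk_lt_mk.2 (by
                have := p.2.isLt
                omega)), map_zero, map_zero, zero_mul]
          · rw [uval, dif_neg (fun hh => hxn hh.1), map_zero, map_zero, zero_mul]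
        refine Eq.trans (sum_trunc (hfn p.1)
          (fun x => (MvPolynomial.C (MvPolynomial.C (uval u3 x (p.2 : ℕ))) : BRing n k l t s) *
            MvPolynomial.C (xvar n k l x (cc.2 : ℕ))) hvan) ?_
        refine Finset.sum_congr rfl fun a _ => ?_
        rw [hLp a, DJB_apply_inl hsum ⟨p.1, a⟩ q cc hq, if_pos hcond]
      · rw [if_neg hcond, map_zero]
        symm
        refine Finset.sum_eq_zero fun a _ => ?_
        rw [DJB_apply_inl hsum ⟨p.1, a⟩ q cc hq, if_neg hcond, mul_zero]
    · rw [DJB_apply_inr hsum p q cc hq, _root_.map_mul, MvPolynomial.map_C, MvPolynomial.map_X]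
      rw [show ((leftSub n (k + l) u3).toRingHom (yvar n k l (p.2 : ℕ) (cc.2 : ℕ))) =
        leftSub n (k + l) u3 (yvar n k l (p.2 : ℕ) (cc.2 : ℕ)) from rfl, leftSub_yvar]
      rw [map_sum, Finset.mul_sum]
      simp only [_root_.map_mul]
      have hvan : ∀ x, f p.1 ≤ x →
          (X (p.1, cc.1) : BRing n k l t s) *
            (MvPolynomial.C (MvPolynomial.C (uval u3 x (p.2 : ℕ))) *
              MvPolynomial.C (yvar n k l x (cc.2 : ℕ))) = 0 := by
        intro x hx
        by_cases hxn : x < n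
        · rw [uval, dif_pos ⟨hxn, by omega⟩,
            h3.2 ⟨x, hxn⟩ ⟨(p.2 : ℕ), by omega⟩ (Fin.mk_lt_mk.2 (by
              have := p.2.isLt
              omega)), map_zero, map_zero, zero_mul, mul_zero]
        · rw [uval, dif_neg (fun hh => hxn hh.1), map_zero, map_zero, zero_mul, mul_zero]
      refine Eq.trans (sum_trunc (hfn p.1)
        (fun x => (X (p.1, cc.1) : BRing n k l t s) *
          (MvPolynomial.C (MvPolynomial.C (uval u3 x (p.2 : ℕ))) *
            MvPolynomial.C (yvar n k l x (cc.2 : ℕ)))) hvan) ?_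
      refine Finset.sum_congr rfl fun a _ => ?_
      rw [hLp a, DJB_apply_inr hsum ⟨p.1, a⟩ q cc hq]
      ring
  rw [hLM, Matrix.det_mul]
  have hdetL : L.det = 1 := by
    refine det_sigma_unitriangular L ?_ ?_
    · intro p q hpq
      simp only [hL, Matrix.of_apply]
      rcases hpq with hlt | ⟨heq, hlt⟩
      · exact if_neg (ne_of_lt hlt)
      · rw [if_pos heq]
        by_cases hqn : (q.2 : ℕ) < n
        · rw [uval, dif_pos ⟨hqn, by have := lt_of_lt_of_le p.2.isLt (hfn p.1); omega⟩,
            h3.2 ⟨(q.2 : ℕ), hqn⟩ _ (Fin.mk_lt_mk.2 hlt), map_zero, map_zero]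
        · rw [uval, dif_neg (fun hh => hqn hh.1), map_zero, map_zero]
    · intro p
      simp only [hL, Matrix.of_apply, eq_self_iff_true, if_true]
      rw [uval, dif_pos ⟨lt_of_lt_of_le p.2.isLt (hfn p.1),
        lt_of_lt_of_le p.2.isLt (hfn p.1)⟩, h3.1, _root_.map_one, _root_.map_one]
  rw [hdetL, one_mul]

end AuxLeft
section AuxDiagMain

variable {n k l : ℕ} {r s t : ℕ} {d : Fin r → ℕ} {e : Fin s → ℕ} {f : Fin t → ℕ}

lemma DeltaJB_leftSub_diag (hsum : (∑ i, d i) + (∑ i, e i) = ∑ j, f j)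
    (an : Fin n → ℂ) (hfn : ∀ j, f j ≤ n) :
    MvPolynomial.map (leftSub n (k + l) (Matrix.diagonal an)).toRingHom
        (DeltaJB n k l d e f hsum) =
      MvPolynomial.C (MvPolynomial.C (∏ i : Fin n, an i ^ tpart f (i : ℕ))) *
        DeltaJB n k l d e f hsum := by
  classical
  rw [DeltaJB_eq_det, RingHom.map_det]
  have hM : (MvPolynomial.map (leftSub n (k + l) (Matrix.diagonal an)).toRingHom :
      BRing n k l t s →+* BRing n k l t s).mapMatrix (DJB n k l d e f hsum) =
      Matrix.of fun p q => (MvPolynomial.C (MvPolynomial.C (dval an (p.2 : ℕ))) :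
        BRing n k l t s) * DJB n k l d e f hsum p q := by
    refine Matrix.ext fun p q => ?_
    rw [RingHom.mapMatrix_apply, Matrix.map_apply, Matrix.of_apply]
    rcases hq : (colEquiv d e f hsum).symm q with cc | cc
    · rw [DJB_apply_inl hsum p q cc hq]
      by_cases hcond : (p.1 : ℕ) = (cc.1 : ℕ)
      · rw [if_pos hcond, MvPolynomial.map_C,
          show ((leftSub n (k + l) (Matrix.diagonal an)).toRingHom
            (xvar n k l (p.2 : ℕ) (cc.2 : ℕ))) =
            leftSub n (k + l) (Matrix.diagonal an) (xvar n k l (p.2 : ℕ) (cc.2 : ℕ)) from rfl,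
          leftSub_diag_xvar, _root_.map_mul]
      · rw [if_neg hcond, map_zero, mul_zero]
    · rw [DJB_apply_inr hsum p q cc hq, _root_.map_mul, MvPolynomial.map_C,
        MvPolynomial.map_X,
        show ((leftSub n (k + l) (Matrix.diagonal an)).toRingHom
          (yvar n k l (p.2 : ℕ) (cc.2 : ℕ))) =
          leftSub n (k + l) (Matrix.diagonal an) (yvar n k l (p.2 : ℕ) (cc.2 : ℕ)) from rfl,
        leftSub_diag_yvar, _root_.map_mul]
      ring
  rw [hM, Matrix.det_mul_column
    (fun p : RowIdx f => (MvPolynomial.C (MvPolynomial.C (dval an (p.2 : ℕ))) :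
      BRing n k l t s)) (DJB n k l d e f hsum)]
  congr 1
  rw [← map_prod, ← map_prod]
  exact congrArg _ (congrArg _ (prod_dval f hfn an))

lemma DeltaJB_rightSub_diag (hsum : (∑ i, d i) + (∑ i, e i) = ∑ j, f j)
    (ak : Fin k → ℂ) (al : Fin l → ℂ) (hdk : ∀ i, d i ≤ k) (hel : ∀ h, e h ≤ l) :
    MvPolynomial.map (rightSub n (k + l)
        (blockDiag k l (Matrix.diagonal ak) (Matrix.diagonal al))).toRingHom
        (DeltaJB n k l d e f hsum) =
      MvPolynomial.C (MvPolynomial.C ((∏ i : Fin k, ak i ^ tpart d (i : ℕ)) *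
        ∏ i : Fin l, al i ^ tpart e (i : ℕ))) * DeltaJB n k l d e f hsum := by
  classical
  rw [DeltaJB_eq_det, RingHom.map_det]
  set w : RowIdx f → ℂ := fun q =>
    Sum.elim (fun cc : (i : Fin r) × Fin (d i) => dval ak (cc.2 : ℕ))
      (fun cc : (i : Fin s) × Fin (e i) => dval al (cc.2 : ℕ))
      ((colEquiv d e f hsum).symm q) with hw
  have hM : (MvPolynomial.map (rightSub n (k + l)
      (blockDiag k l (Matrix.diagonal ak) (Matrix.diagonal al))).toRingHom :
      BRing n k l t s →+* BRing n k l t s).mapMatrix (DJB n k l d e f hsum) =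
      Matrix.of fun p q => (MvPolynomial.C (MvPolynomial.C (w q)) : BRing n k l t s) *
        DJB n k l d e f hsum p q := by
    refine Matrix.ext fun p q => ?_
    rw [RingHom.mapMatrix_apply, Matrix.map_apply, Matrix.of_apply]
    rcases hq : (colEquiv d e f hsum).symm q with cc | cc
    · have hwq : w q = dval ak (cc.2 : ℕ) := by rw [hw]; simp only [hq, Sum.elim_inl]
      rw [DJB_apply_inl hsum p q cc hq, hwq]
      by_cases hcond : (p.1 : ℕ) = (cc.1 : ℕ)
      · rw [if_pos hcond, MvPolynomial.map_C,
          show ((rightSub n (k + l)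
            (blockDiag k l (Matrix.diagonal ak) (Matrix.diagonal al))).toRingHom
            (xvar n k l (p.2 : ℕ) (cc.2 : ℕ))) =
            rightSub n (k + l) (blockDiag k l (Matrix.diagonal ak) (Matrix.diagonal al))
              (xvar n k l (p.2 : ℕ) (cc.2 : ℕ)) from rfl,
          rightSub_diag_xvar, _root_.map_mul]
      · rw [if_neg hcond, map_zero, mul_zero]
    · have hwq : w q = dval al (cc.2 : ℕ) := by rw [hw]; simp only [hq, Sum.elim_inr]
      rw [DJB_apply_inr hsum p q cc hq, hwq, _root_.map_mul, MvPolynomial.map_C,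
        MvPolynomial.map_X,
        show ((rightSub n (k + l)
          (blockDiag k l (Matrix.diagonal ak) (Matrix.diagonal al))).toRingHom
          (yvar n k l (p.2 : ℕ) (cc.2 : ℕ))) =
          rightSub n (k + l) (blockDiag k l (Matrix.diagonal ak) (Matrix.diagonal al))
            (yvar n k l (p.2 : ℕ) (cc.2 : ℕ)) from rfl,
        rightSub_diag_yvar, _root_.map_mul]
      ring
  rw [hM, Matrix.det_mul_row
    (fun q : RowIdx f => (MvPolynomial.C (MvPolynomial.C (w q)) : BRing n k l t s))
    (DJB n k l d e f hsum)]
  congr 1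
  rw [← map_prod, ← map_prod]
  refine congrArg _ (congrArg _ ?_)
  have h1 : ∏ q : RowIdx f, w q =
      ∏ cc : ((i : Fin r) × Fin (d i)) ⊕ ((i : Fin s) × Fin (e i)),
        Sum.elim (fun cc : (i : Fin r) × Fin (d i) => dval ak (cc.2 : ℕ))
          (fun cc : (i : Fin s) × Fin (e i) => dval al (cc.2 : ℕ)) cc :=
    Equiv.prod_comp (colEquiv d e f hsum).symm _
  rw [h1, Fintype.prod_sum_type]
  simp only [Sum.elim_inl, Sum.elim_inr]
  rw [prod_dval d hdk ak, prod_dval e hel al]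

end AuxDiagMain
section AuxRightMain

variable {n k l : ℕ} {r s t : ℕ} {d : Fin r → ℕ} {e : Fin s → ℕ} {f : Fin t → ℕ}

set_option maxHeartbeats 1000000 in
lemma DeltaJB_rightSub (hsum : (∑ i, d i) + (∑ i, e i) = ∑ j, f j)
    (u1 : Matrix (Fin k) (Fin k) ℂ) (u2 : Matrix (Fin l) (Fin l) ℂ)
    (h1 : IsUpperUni u1) (h2 : IsUpperUni u2)
    (hdk : ∀ i, d i ≤ k) (hel : ∀ h, e h ≤ l) :
    MvPolynomial.map (rightSub n (k + l) (blockDiag k l u1 u2)).toRingHom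
        (DeltaJB n k l d e f hsum) = DeltaJB n k l d e f hsum := by
  classical
  rw [DeltaJB_eq_det, RingHom.map_det]
  set A1 : Matrix ((i : Fin r) × Fin (d i)) ((i : Fin r) × Fin (d i)) (BRing n k l t s) :=
    Matrix.of fun p q => if p.1 = q.1
      then (MvPolynomial.C (MvPolynomial.C (uval u1 (p.2 : ℕ) (q.2 : ℕ))) : BRing n k l t s)
      else 0 with hA1
  set A2 : Matrix ((i : Fin s) × Fin (e i)) ((i : Fin s) × Fin (e i)) (BRing n k l t s) :=
    Matrix.of fun p q => if p.1 = q.1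
      then (MvPolynomial.C (MvPolynomial.C (uval u2 (p.2 : ℕ) (q.2 : ℕ))) : BRing n k l t s)
      else 0 with hA2
  set V : Matrix (RowIdx f) (RowIdx f) (BRing n k l t s) :=
    (Matrix.fromBlocks A1 0 0 A2).submatrix (colEquiv d e f hsum).symm
      (colEquiv d e f hsum).symm with hV
  have hMV : (MvPolynomial.map (rightSub n (k + l) (blockDiag k l u1 u2)).toRingHom :
      BRing n k l t s →+* BRing n k l t s).mapMatrix (DJB n k l d e f hsum) =
      DJB n k l d e f hsum * V := by
    refine Matrix.ext fun p q => ?_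
    rw [RingHom.mapMatrix_apply, Matrix.map_apply, Matrix.mul_apply]
    rw [← Equiv.sum_comp (colEquiv d e f hsum)
      (fun x => DJB n k l d e f hsum p x * V x q)]
    simp only [hV, Matrix.submatrix_apply, Equiv.symm_apply_apply]
    rw [Fintype.sum_sum_type]
    rcases hq : (colEquiv d e f hsum).symm q with cc0 | cc0
    · have hz2 : ∀ cc : (i : Fin s) × Fin (e i),
          DJB n k l d e f hsum p ((colEquiv d e f hsum) (Sum.inr cc)) *
            (Matrix.fromBlocks A1 0 0 A2) (Sum.inr cc) (Sum.inl cc0) = 0 := by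
        intro cc
        rw [Matrix.fromBlocks_apply₂₁, Matrix.zero_apply, mul_zero]
      rw [Finset.sum_congr rfl (fun cc _ => hz2 cc), Finset.sum_const, smul_zero, add_zero]
      have hb1 : ∀ cc : (i : Fin r) × Fin (d i),
          (Matrix.fromBlocks A1 0 0 A2) (Sum.inl cc) (Sum.inl cc0) = A1 cc cc0 :=
        fun cc => Matrix.fromBlocks_apply₁₁ _ _ _ _ _ _
      rw [Finset.sum_congr rfl (fun cc _ => by rw [hb1 cc])]
      rw [← Finset.univ_sigma_univ, Finset.sum_sigma]
      rw [Finset.sum_eq_single cc0.1]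
      rotate_left
      · intro i' _ hi'
        refine Finset.sum_eq_zero fun c _ => ?_
        have hz : A1 ⟨i', c⟩ cc0 = 0 := by
          simp only [hA1, Matrix.of_apply]
          exact if_neg hi'
        rw [hz, mul_zero]
      · exact fun h => absurd (Finset.mem_univ _) h
      have hA1p : ∀ c : Fin (d cc0.1), A1 ⟨cc0.1, c⟩ cc0 =
          MvPolynomial.C (MvPolynomial.C (uval u1 (c : ℕ) (cc0.2 : ℕ))) := by
        intro c
        simp only [hA1, Matrix.of_apply]
        simp
      rw [DJB_apply_inl hsum p q cc0 hq]
      by_cases hcond : (p.1 : ℕ) = (cc0.1 : ℕ)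
      · rw [if_pos hcond, MvPolynomial.map_C,
          show ((rightSub n (k + l) (blockDiag k l u1 u2)).toRingHom
            (xvar n k l (p.2 : ℕ) (cc0.2 : ℕ))) =
            rightSub n (k + l) (blockDiag k l u1 u2) (xvar n k l (p.2 : ℕ) (cc0.2 : ℕ))
            from rfl, rightSub_blockDiag_xvar]
        rw [map_sum]
        simp only [_root_.map_mul]
        have hvan : ∀ x, d cc0.1 ≤ x →
            (MvPolynomial.C (MvPolynomial.C (uval u1 x (cc0.2 : ℕ))) : BRing n k l t s) *
              MvPolynomial.C (xvar n k l (p.2 : ℕ) x) = 0 := by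
          intro x hx
          by_cases hxk : x < k
          · rw [uval, dif_pos ⟨hxk, by have := hdk cc0.1; omega⟩,
              h1.2 ⟨x, hxk⟩ ⟨(cc0.2 : ℕ), by have := hdk cc0.1; omega⟩
                (Fin.mk_lt_mk.2 (by have := cc0.2.isLt; omega)),
              map_zero, map_zero, zero_mul]
          · rw [uval, dif_neg (fun hh => hxk hh.1), map_zero, map_zero, zero_mul]
        refine Eq.trans (sum_trunc (hdk cc0.1)
          (fun x => (MvPolynomial.C (MvPolynomial.C (uval u1 x (cc0.2 : ℕ))) :
            BRing n k l t s) * MvPolynomial.C (xvar n k l (p.2 : ℕ) x)) hvan) ?_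
        refine Finset.sum_congr rfl fun c _ => ?_
        rw [hA1p c, DJB_apply_inl hsum p ((colEquiv d e f hsum) (Sum.inl ⟨cc0.1, c⟩))
          ⟨cc0.1, c⟩ (Equiv.symm_apply_apply _ _), if_pos hcond]
        ring
      · rw [if_neg hcond, map_zero]
        symm
        refine Finset.sum_eq_zero fun c _ => ?_
        rw [DJB_apply_inl hsum p ((colEquiv d e f hsum) (Sum.inl ⟨cc0.1, c⟩))
          ⟨cc0.1, c⟩ (Equiv.symm_apply_apply _ _), if_neg hcond, zero_mul]
    · have hz1 : ∀ cc : (i : Fin r) × Fin (d i),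
          DJB n k l d e f hsum p ((colEquiv d e f hsum) (Sum.inl cc)) *
            (Matrix.fromBlocks A1 0 0 A2) (Sum.inl cc) (Sum.inr cc0) = 0 := by
        intro cc
        rw [Matrix.fromBlocks_apply₁₂, Matrix.zero_apply, mul_zero]
      rw [Finset.sum_congr rfl (fun cc _ => hz1 cc), Finset.sum_const, smul_zero, zero_add]
      have hb2 : ∀ cc : (i : Fin s) × Fin (e i),
          (Matrix.fromBlocks A1 0 0 A2) (Sum.inr cc) (Sum.inr cc0) = A2 cc cc0 :=
        fun cc => Matrix.fromBlocks_apply₂₂ _ _ _ _ _ _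
      rw [Finset.sum_congr rfl (fun cc _ => by rw [hb2 cc])]
      rw [← Finset.univ_sigma_univ, Finset.sum_sigma]
      rw [Finset.sum_eq_single cc0.1]
      rotate_left
      · intro i' _ hi'
        refine Finset.sum_eq_zero fun c _ => ?_
        have hz : A2 ⟨i', c⟩ cc0 = 0 := by
          simp only [hA2, Matrix.of_apply]
          exact if_neg hi'
        rw [hz, mul_zero]
      · exact fun h => absurd (Finset.mem_univ _) h
      have hA2p : ∀ c : Fin (e cc0.1), A2 ⟨cc0.1, c⟩ cc0 =
          MvPolynomial.C (MvPolynomial.C (uval u2 (c : ℕ) (cc0.2 : ℕ))) := by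
        intro c
        simp only [hA2, Matrix.of_apply]
        simp
      rw [DJB_apply_inr hsum p q cc0 hq, _root_.map_mul, MvPolynomial.map_C,
        MvPolynomial.map_X,
        show ((rightSub n (k + l) (blockDiag k l u1 u2)).toRingHom
          (yvar n k l (p.2 : ℕ) (cc0.2 : ℕ))) =
          rightSub n (k + l) (blockDiag k l u1 u2) (yvar n k l (p.2 : ℕ) (cc0.2 : ℕ))
          from rfl, rightSub_blockDiag_yvar]
      rw [map_sum, Finset.mul_sum]
      simp only [_root_.map_mul]
      have hvan : ∀ x, e cc0.1 ≤ x →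
          (X (p.1, cc0.1) : BRing n k l t s) *
            (MvPolynomial.C (MvPolynomial.C (uval u2 x (cc0.2 : ℕ))) *
              MvPolynomial.C (yvar n k l (p.2 : ℕ) x)) = 0 := by
        intro x hx
        by_cases hxl : x < l
        · rw [uval, dif_pos ⟨hxl, by have := hel cc0.1; omega⟩,
            h2.2 ⟨x, hxl⟩ ⟨(cc0.2 : ℕ), by have := hel cc0.1; omega⟩
              (Fin.mk_lt_mk.2 (by have := cc0.2.isLt; omega)),
            map_zero, map_zero, zero_mul, mul_zero]
        · rw [uval, dif_neg (fun hh => hxl hh.1), map_zero, map_zero, zero_mul, mul_zero]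
      refine Eq.trans (sum_trunc (hel cc0.1)
        (fun x => (X (p.1, cc0.1) : BRing n k l t s) *
          (MvPolynomial.C (MvPolynomial.C (uval u2 x (cc0.2 : ℕ))) *
            MvPolynomial.C (yvar n k l (p.2 : ℕ) x))) hvan) ?_
      refine Finset.sum_congr rfl fun c _ => ?_
      rw [hA2p c, DJB_apply_inr hsum p ((colEquiv d e f hsum) (Sum.inr ⟨cc0.1, c⟩))
        ⟨cc0.1, c⟩ (Equiv.symm_apply_apply _ _)]
      ring
  rw [hMV, Matrix.det_mul]
  have hdet : V.det = 1 := by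
    rw [hV, Matrix.det_submatrix_equiv_self (colEquiv d e f hsum).symm,
      Matrix.det_fromBlocks_zero₂₁]
    have hd1 : A1.det = 1 := by
      rw [← Matrix.det_transpose]
      refine det_sigma_unitriangular A1.transpose ?_ ?_
      · intro p q hpq
        rw [Matrix.transpose_apply]
        simp only [hA1, Matrix.of_apply]
        rcases hpq with hlt | ⟨heq, hlt⟩
        · exact if_neg (fun hh => absurd hh.symm (ne_of_lt hlt))
        · rw [if_pos heq.symm]
          by_cases hqk : (q.2 : ℕ) < k
          · rw [uval, dif_pos ⟨hqk, by have := lt_of_lt_of_le p.2.isLt (hdk p.1); omega⟩,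
              h1.2 ⟨(q.2 : ℕ), hqk⟩ _ (Fin.mk_lt_mk.2 hlt), map_zero, map_zero]
          · rw [uval, dif_neg (fun hh => hqk hh.1), map_zero, map_zero]
      · intro p
        rw [Matrix.transpose_apply]
        simp only [hA1, Matrix.of_apply, eq_self_iff_true, if_true]
        rw [uval, dif_pos ⟨lt_of_lt_of_le p.2.isLt (hdk p.1),
          lt_of_lt_of_le p.2.isLt (hdk p.1)⟩, h1.1, _root_.map_one, _root_.map_one]
    have hd2 : A2.det = 1 := by
      rw [← Matrix.det_transpose]
      refine det_sigma_unitriangular A2.transpose ?_ ?_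
      · intro p q hpq
        rw [Matrix.transpose_apply]
        simp only [hA2, Matrix.of_apply]
        rcases hpq with hlt | ⟨heq, hlt⟩
        · exact if_neg (fun hh => absurd hh.symm (ne_of_lt hlt))
        · rw [if_pos heq.symm]
          by_cases hql : (q.2 : ℕ) < l
          · rw [uval, dif_pos ⟨hql, by have := lt_of_lt_of_le p.2.isLt (hel p.1); omega⟩,
              h2.2 ⟨(q.2 : ℕ), hql⟩ _ (Fin.mk_lt_mk.2 hlt), map_zero, map_zero]
          · rw [uval, dif_neg (fun hh => hql hh.1), map_zero, map_zero]
      · intro p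
        rw [Matrix.transpose_apply]
        simp only [hA2, Matrix.of_apply, eq_self_iff_true, if_true]
        rw [uval, dif_pos ⟨lt_of_lt_of_le p.2.isLt (hel p.1),
          lt_of_lt_of_le p.2.isLt (hel p.1)⟩, h2.1, _root_.map_one, _root_.map_one]
    rw [hd1, hd2, one_mul]
  rw [hdet, mul_one]

end AuxRightMain
/-- For every matrix `M = (m_{ih})` of non-negative integers, the
coefficient polynomial `Δ_{(D,E,F),M}` in the `β`-expansion of `Δ_{(D,E,F),(J,B)}`
lies in the tensor product algebra `TA_{n,k,ℓ}`, and it is an eigenvector for the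
product of diagonal tori `A_n × A_k × A_ℓ` with eigencharacter
`ψ^{F^t} × ψ^{D^t} × ψ^{E^t}`. -/
theorem deltaCoeff_mem_TA_and_weight
    (n k l : ℕ) (hn : 0 < n) (hk : 0 < k) (hl : 0 < l)
    {r s t : ℕ} (hr : r ≤ k) (hs : s ≤ l) (ht : t ≤ min n (k + l))
    (d : Fin r → ℕ) (e : Fin s → ℕ) (f : Fin t → ℕ)
    (hd : Antitone d) (he : Antitone e) (hf : Antitone f)
    (hdpos : ∀ i, 0 < d i) (hepos : ∀ i, 0 < e i) (hfpos : ∀ j, 0 < f j)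
    (hsum : (∑ i, d i) + (∑ i, e i) = ∑ j, f j)
    (M : Fin t × Fin s →₀ ℕ) :
    DeltaCoeff n k l d e f hsum M ∈ TA n k l ∧
    ∀ (an : Fin n → ℂ) (ak : Fin k → ℂ) (al : Fin l → ℂ),
      (∀ i, an i ≠ 0) → (∀ i, ak i ≠ 0) → (∀ i, al i ≠ 0) →
      leftSub n (k + l) (Matrix.diagonal an) (DeltaCoeff n k l d e f hsum M) =
        (∏ i : Fin n, an i ^ tpart f (i : ℕ)) • DeltaCoeff n k l d e f hsum M ∧
      rightSub n (k + l) (blockDiag k l (Matrix.diagonal ak) (Matrix.diagonal al))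
          (DeltaCoeff n k l d e f hsum M) =
        ((∏ i : Fin k, ak i ^ tpart d (i : ℕ)) * ∏ i : Fin l, al i ^ tpart e (i : ℕ)) •
          DeltaCoeff n k l d e f hsum M := by
  classical
  by_cases hdeg : (∀ j, f j ≤ n) ∧ (∀ i, d i ≤ k) ∧ (∀ h, e h ≤ l)
  · obtain ⟨hfn, hdk, hel⟩ := hdeg
    constructor
    · intro u3 u1 u2 h3 h1 h2
      constructor
      · have h := MvPolynomial.coeff_map (leftSub n (k + l) u3).toRingHom
          (DeltaJB n k l d e f hsum) M
        rw [DeltaJB_leftSub hsum u3 h3 hfn] at h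
        exact h.symm
      · have h := MvPolynomial.coeff_map
          (rightSub n (k + l) (blockDiag k l u1 u2)).toRingHom
          (DeltaJB n k l d e f hsum) M
        rw [DeltaJB_rightSub hsum u1 u2 h1 h2 hdk hel] at h
        exact h.symm
    · intro an ak al _ _ _
      constructor
      · have h := MvPolynomial.coeff_map
          (leftSub n (k + l) (Matrix.diagonal an)).toRingHom
          (DeltaJB n k l d e f hsum) M
        rw [DeltaJB_leftSub_diag hsum an hfn, MvPolynomial.coeff_C_mul] at h
        rw [MvPolynomial.smul_eq_C_mul]
        exact h.symm
      · have h := MvPolynomial.coeff_map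
          (rightSub n (k + l)
            (blockDiag k l (Matrix.diagonal ak) (Matrix.diagonal al))).toRingHom
          (DeltaJB n k l d e f hsum) M
        rw [DeltaJB_rightSub_diag hsum ak al hdk hel, MvPolynomial.coeff_C_mul] at h
        rw [MvPolynomial.smul_eq_C_mul]
        exact h.symm
  · have hzero : DeltaJB n k l d e f hsum = 0 := DeltaJB_eq_zero hsum hdeg
    have hc : DeltaCoeff n k l d e f hsum M = 0 := by
      rw [DeltaCoeff, hzero, MvPolynomial.coeff_zero]
    constructor
    · intro u3 u1 u2 _ _ _
      rw [hc]
      exact ⟨map_zero _, map_zero _⟩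
    · intro an ak al _ _ _
      rw [hc]
      exact ⟨by rw [map_zero, smul_zero], by rw [map_zero, smul_zero]⟩

end HTW
end
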